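/- arXiv:1905.07468 — 3 statements merged into one kernel-verified Lean document; each statement's English description precedes it below -/
import Mathlib

section
/- Let G = (V,E) be the directed spanner instance built from a projection games instance in which every vertex of L has degree exactly K ≥ 1, with parameter k ≥ 2, and let y' be built from y*, where the moment matrix (y*_{Ψ1∪Ψ2}), indexed by subsets Ψ1, Ψ2 ⊆ (L∪R)×Σ with |Ψ1|, |Ψ2| ≤ r+2, is positive semidefinite. Then the moment matrix M_{r+2}(y') = (y'_{I∪J}), indexed by subsets I, J ⊆ E with |I|, |J| ≤ r+2, is positive semidefinite; in particular so is M_{r+1}(y'). -/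
open Finset

/-- A directed path in the graph with edge set `E`, from `u` to `v`, given as its (nonempty)
list of edges: consecutive edges are incident, the first edge starts at `u`, the last edge ends
at `v`, and no vertex is visited twice. -/
def IsDirPath {V : Type*} [DecidableEq V] (E : Finset (V × V)) (u v : V)
    (p : List (V × V)) : Prop :=
  p ≠ [] ∧ (∀ e ∈ p, e ∈ E) ∧ Option.map Prod.fst p.head? = some u ∧
    Option.map Prod.snd p.getLast? = some v ∧
    List.Chain' (fun e f => e.2 = f.1) p ∧ (u :: p.map Prod.snd).Nodup

/-- `z ∈ Z^{u,v}` (with respect to stretch `t`): a fractional cut against the stretch-`t`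
paths from `u` to `v`, i.e. `z : E → [0,1]` with `∑_{e ∈ P} z e ≥ 1` for every path
`P ∈ 𝒫_{u,v}` (at most `t` edges). -/
def InZ {V : Type*} [DecidableEq V] (E : Finset (V × V)) (t : ℕ) (u v : V)
    (z : V × V → ℝ) : Prop :=
  (∀ e ∈ E, 0 ≤ z e ∧ z e ≤ 1) ∧
  ∀ p : List (V × V), IsDirPath E u v p → p.length ≤ t → 1 ≤ (p.map z).sum

/-- A `t`-spanner of the directed graph with edge set `E`: a subset `S ⊆ E` such that every
edge `(u,v) ∈ E` is spanned by a directed path from `u` to `v` of at most `t` edges,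
all belonging to `S`. -/
def IsSpanner {V : Type*} [DecidableEq V] (E S : Finset (V × V)) (t : ℕ) : Prop :=
  S ⊆ E ∧ ∀ e ∈ E, ∃ p : List (V × V), IsDirPath S e.1 e.2 p ∧ p.length ≤ t

/-- The moment matrix `(y_{I ∪ J})`, indexed by the subsets `I, J ⊆ E` with `|I|, |J| ≤ r`. -/
def momentMatrixE {α : Type*} [Fintype α] [DecidableEq α] (E : Finset α) (r : ℕ)
    (y : Finset α → ℝ) :
    Matrix {S : Finset α // S ⊆ E ∧ S.card ≤ r} {S : Finset α // S ⊆ E ∧ S.card ≤ r} ℝ :=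
  Matrix.of fun I J => y (I.1 ∪ J.1)

/-- The slack moment matrix `(∑_{e ∈ E} z e · y_{I∪J∪{e}} − y_{I∪J})`, indexed by the subsets
`I, J ⊆ E` with `|I|, |J| ≤ r`. -/
def slackMatrixE {α : Type*} [Fintype α] [DecidableEq α] (E : Finset α) (r : ℕ)
    (y : Finset α → ℝ) (z : α → ℝ) :
    Matrix {S : Finset α // S ⊆ E ∧ S.card ≤ r} {S : Finset α // S ⊆ E ∧ S.card ≤ r} ℝ :=
  Matrix.of fun I J => (∑ e ∈ E, z e * y (insert e (I.1 ∪ J.1))) - y (I.1 ∪ J.1)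

/-- The ambient vertex type for the directed `(2k−1)`-spanner instance built from a projection
games instance with left vertices `L`, right vertices `R` and alphabet `Sg`; `D` is the number
of duplicate vertices (`D = k·K·|Σ|`) and `T` the number of internal vertices of each middle
path (`T = 2k−4`).  The five summands are: the label vertices `c_{i,σ}`, the duplicate vertices
`c_i^l`, the label vertices `x_{j,σ}`, the duplicate vertices `x_j^l`, and the middle-path
vertices `w_{i,j,σL,σR,t}`. -/
abbrev SpV (L R Sg : Type) (D T : ℕ) : Type :=
  (L × Sg) ⊕ (L × Fin D) ⊕ (R × Sg) ⊕ (R × Fin D) ⊕ (L × R × Sg × Sg × Fin T)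

namespace SpV

variable {L R Sg : Type} {D T : ℕ}

/-- The label vertex `c_{i,σ}`. -/
def cLab (i : L) (σ : Sg) : SpV L R Sg D T := Sum.inl (i, σ)

/-- The duplicate vertex `c_i^l`. -/
def cDup (i : L) (l : Fin D) : SpV L R Sg D T := Sum.inr (Sum.inl (i, l))

/-- The label vertex `x_{j,σ}`. -/
def xLab (j : R) (σ : Sg) : SpV L R Sg D T := Sum.inr (Sum.inr (Sum.inl (j, σ)))

/-- The duplicate vertex `x_j^l`. -/
def xDup (j : R) (l : Fin D) : SpV L R Sg D T :=
  Sum.inr (Sum.inr (Sum.inr (Sum.inl (j, l))))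

/-- The middle-path vertex `w_{i,j,σL,σR,t}`. -/
def mid (i : L) (j : R) (σL σR : Sg) (t : Fin T) : SpV L R Sg D T :=
  Sum.inr (Sum.inr (Sum.inr (Sum.inr (i, j, σL, σR, t))))

end SpV

set_option synthInstance.maxSize 1000 in
instance SpV.instDecidableEq {L R Sg : Type} [DecidableEq L] [DecidableEq R] [DecidableEq Sg]
    {D T : ℕ} : DecidableEq (SpV L R Sg D T) := inferInstance

instance SpV.instFintype {L R Sg : Type} [Fintype L] [Fintype R] [Fintype Sg] {D T : ℕ} :
    Fintype (SpV L R Sg D T) := inferInstance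

namespace Spanner

/-- The number `k·K·|Σ|` of duplicate vertices per projection-games vertex. -/
abbrev numDup (Sg : Type) [Fintype Sg] (k K : ℕ) : ℕ := k * K * Fintype.card Sg

/-- The vertex type of the directed spanner instance with parameters `k, K`. -/
abbrev Vt (L R Sg : Type) [Fintype Sg] (k K : ℕ) : Type :=
  SpV L R Sg (numDup Sg k K) (2 * k - 4)

/-- The edge set `E_L = {(c_i^l, c_{i,σ})}`. -/
def ELedges (L R Sg : Type) [Fintype L] [Fintype R] [Fintype Sg]
    [DecidableEq L] [DecidableEq R] [DecidableEq Sg] (k K : ℕ) :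
    Finset (Vt L R Sg k K × Vt L R Sg k K) :=
  Finset.univ.image fun p : L × Fin (numDup Sg k K) × Sg =>
    (SpV.cDup p.1 p.2.1, SpV.cLab p.1 p.2.2)

/-- The edge set `E_R = {(x_{j,σ}, x_j^l)}`. -/
def ERedges (L R Sg : Type) [Fintype L] [Fintype R] [Fintype Sg]
    [DecidableEq L] [DecidableEq R] [DecidableEq Sg] (k K : ℕ) :
    Finset (Vt L R Sg k K × Vt L R Sg k K) :=
  Finset.univ.image fun p : R × Fin (numDup Sg k K) × Sg =>
    (SpV.xLab p.1 p.2.2, SpV.xDup p.1 p.2.1)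

/-- The edge set `E_LStars = {(c_{i,1}, c_{i,σ}), (c_{i,σ}, c_{i,1}) : σ ≠ 1}`
(`σ0` plays the role of the fixed label `1 ∈ Σ`). -/
def ELStars (L R : Type) {Sg : Type} [Fintype L] [Fintype R] [Fintype Sg]
    [DecidableEq L] [DecidableEq R] [DecidableEq Sg] (σ0 : Sg) (k K : ℕ) :
    Finset (Vt L R Sg k K × Vt L R Sg k K) :=
  ((Finset.univ.filter fun p : L × Sg => p.2 ≠ σ0).image fun p =>
      (SpV.cLab p.1 σ0, SpV.cLab p.1 p.2)) ∪
  ((Finset.univ.filter fun p : L × Sg => p.2 ≠ σ0).image fun p =>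
      (SpV.cLab p.1 p.2, SpV.cLab p.1 σ0))

/-- The edge set `E_RStars = {(x_{j,1}, x_{j,σ}), (x_{j,σ}, x_{j,1}) : σ ≠ 1}`. -/
def ERStars (L R : Type) {Sg : Type} [Fintype L] [Fintype R] [Fintype Sg]
    [DecidableEq L] [DecidableEq R] [DecidableEq Sg] (σ0 : Sg) (k K : ℕ) :
    Finset (Vt L R Sg k K × Vt L R Sg k K) :=
  ((Finset.univ.filter fun p : R × Sg => p.2 ≠ σ0).image fun p =>
      (SpV.xLab p.1 σ0, SpV.xLab p.1 p.2)) ∪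
  ((Finset.univ.filter fun p : R × Sg => p.2 ≠ σ0).image fun p =>
      (SpV.xLab p.1 p.2, SpV.xLab p.1 σ0))

/-- The edge set `E_Outer = {(c_i^l, x_j^l) : {c_i, x_j} ∈ E_Proj, l ∈ [kK|Σ|]}`. -/
def EOuter {L R : Type} (Sg : Type) [Fintype L] [Fintype R] [Fintype Sg]
    [DecidableEq L] [DecidableEq R] [DecidableEq Sg]
    (Eproj : Finset (L × R)) (k K : ℕ) :
    Finset (Vt L R Sg k K × Vt L R Sg k K) :=
  (Eproj ×ˢ (Finset.univ : Finset (Fin (numDup Sg k K)))).image fun p =>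
    (SpV.cDup p.1.1 p.2, SpV.xDup p.1.2 p.2)

/-- The vertex sequence `c_{i,σL}, w_{i,j,σL,σR,1}, …, w_{i,j,σL,σR,2k−4}, x_{j,σR}` of the
middle path (for `k = 2` it is just `c_{i,σL}, x_{j,σR}`). -/
def midVerts {L R Sg : Type} [Fintype Sg] (k K : ℕ) (i : L) (j : R) (σL σR : Sg) :
    List (Vt L R Sg k K) :=
  (SpV.cLab i σL :: (List.finRange (2 * k - 4)).map fun t => SpV.mid i j σL σR t) ++
    [SpV.xLab j σR]

/-- The list of consecutive edges of a vertex sequence. -/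
def pathEdges {V : Type*} (vs : List V) : List (V × V) := vs.zip vs.tail

/-- The edge list `E_M^{i,j,σL,σR}` of the middle path from `c_{i,σL}` to `x_{j,σR}`. -/
def EMpath {L R Sg : Type} [Fintype Sg] (k K : ℕ) (i : L) (j : R) (σL σR : Sg) :
    List (Vt L R Sg k K × Vt L R Sg k K) :=
  pathEdges (midVerts k K i j σL σR)

/-- The edge set `E_M = ⋃_{ {c_i,x_j} ∈ E_Proj, (σL,σR) ∈ π_{i,j} } E_M^{i,j,σL,σR}`. -/
def EMedges {L R Sg : Type} [Fintype L] [Fintype R] [Fintype Sg]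
    [DecidableEq L] [DecidableEq R] [DecidableEq Sg]
    (Eproj : Finset (L × R)) (π : L → R → Sg → Sg) (k K : ℕ) :
    Finset (Vt L R Sg k K × Vt L R Sg k K) :=
  Eproj.biUnion fun e => (Finset.univ : Finset Sg).biUnion fun σL =>
    (EMpath k K e.1 e.2 σL (π e.1 e.2 σL)).toFinset

/-- The edge set `E = E_L ∪ E_LStars ∪ E_M ∪ E_RStars ∪ E_R ∪ E_Outer` of the directed
spanner instance. -/
def Edges {L R Sg : Type} [Fintype L] [Fintype R] [Fintype Sg]
    [DecidableEq L] [DecidableEq R] [DecidableEq Sg]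
    (Eproj : Finset (L × R)) (π : L → R → Sg → Sg) (σ0 : Sg) (k K : ℕ) :
    Finset (Vt L R Sg k K × Vt L R Sg k K) :=
  ELedges L R Sg k K ∪ ELStars L R σ0 k K ∪ EMedges Eproj π k K ∪
    ERStars L R σ0 k K ∪ ERedges L R Sg k K ∪ EOuter Sg Eproj k K

/-- The vertex set `V = L_Labels ∪ L_Dups ∪ R_Labels ∪ R_Dups ∪ M_Paths` of the directed
spanner instance. -/
def Verts {L R Sg : Type} [Fintype L] [Fintype R] [Fintype Sg]
    [DecidableEq L] [DecidableEq R] [DecidableEq Sg]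
    (Eproj : Finset (L × R)) (π : L → R → Sg → Sg) (k K : ℕ) :
    Finset (Vt L R Sg k K) :=
  (Finset.univ.image fun p : L × Sg => SpV.cLab p.1 p.2) ∪
  (Finset.univ.image fun p : L × Fin (numDup Sg k K) => SpV.cDup p.1 p.2) ∪
  (Finset.univ.image fun p : R × Sg => SpV.xLab p.1 p.2) ∪
  (Finset.univ.image fun p : R × Fin (numDup Sg k K) => SpV.xDup p.1 p.2) ∪
  (Eproj.biUnion fun e => (Finset.univ : Finset Sg).biUnion fun σL =>
    Finset.univ.image fun t : Fin (2 * k - 4) =>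
      SpV.mid e.1 e.2 σL (π e.1 e.2 σL) t)

/-- The map `Φ` sending an edge of `E ∖ E_Outer` to the corresponding label set:
`Φ((c_i^l, c_{i,σ})) = {(c_i, σ)}`, `Φ((x_{j,σ}, x_j^l)) = {(x_j, σ)}`, and `Φ(e) = ∅` for
`e ∈ E_LStars ∪ E_M ∪ E_RStars`. -/
def Phi {L R Sg : Type} [Fintype Sg] {k K : ℕ}
    (e : Vt L R Sg k K × Vt L R Sg k K) : Finset ((L ⊕ R) × Sg) :=
  match e with
  | (Sum.inr (Sum.inl _), Sum.inl (i, σ)) => {(Sum.inl i, σ)}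
  | (Sum.inr (Sum.inr (Sum.inl (j, σ))), Sum.inr (Sum.inr (Sum.inr (Sum.inl _)))) =>
      {(Sum.inr j, σ)}
  | _ => ∅

/-- The fractional solution `y'` built from a solution `y*` of the projection games SDP:
`y'_S = 0` if `S` contains an edge of `E_Outer`, and `y'_S = y*_{Φ(S)}` otherwise
(where `Φ(S) = ⋃_{e ∈ S} Φ(e)`). -/
def yPrime {L R Sg : Type} [Fintype L] [Fintype R] [Fintype Sg]
    [DecidableEq L] [DecidableEq R] [DecidableEq Sg]
    (Eproj : Finset (L × R)) (k K : ℕ) (ystar : Finset ((L ⊕ R) × Sg) → ℝ)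
    (S : Finset (Vt L R Sg k K × Vt L R Sg k K)) : ℝ :=
  if (S ∩ EOuter Sg Eproj k K).Nonempty then 0 else ystar (S.biUnion Phi)

end Spanner

/-!
Writing `d_I ∈ {0,1}` for the indicator that `I` avoids `E_Outer`, we have
`y'_{I ∪ J} = d_I d_J y*_{Φ(I) ∪ Φ(J)}`, and `Φ(I)` is again an index of `M(y*)` because every
`Φ(e)` has at most one element. So `M(y') = D · M(y*)[Φ, Φ] · D` with `D = diag d`: a congruence of a (repeated-index)
principal submatrix of the positive semidefinite `M(y*)`.
-/

-- `Spanner.yPrime` is the instance `F = E_Outer`, `f = Φ`.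
def maskedPullback {α β : Type*} [DecidableEq α] [DecidableEq β] (F : Finset α)
    (f : α → Finset β) (y : Finset β → ℝ) (S : Finset α) : ℝ :=
  if (S ∩ F).Nonempty then 0 else y (S.biUnion f)

section MaskedPullback

variable {α β : Type*} [DecidableEq α] [DecidableEq β] (F : Finset α) (f : α → Finset β)
  (y : Finset β → ℝ)

lemma maskedPullback_union (I J : Finset α) :
    maskedPullback F f y (I ∪ J) =
      (if (I ∩ F).Nonempty then 0 else 1) * (if (J ∩ F).Nonempty then 0 else 1) *
        y (I.biUnion f ∪ J.biUnion f) := by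
  by_cases hI : (I ∩ F).Nonempty
  · simp [maskedPullback, hI.mono (inter_subset_inter_right subset_union_left), hI]
  by_cases hJ : (J ∩ F).Nonempty
  · simp [maskedPullback, hJ.mono (inter_subset_inter_right subset_union_right), hJ]
  simp_all [maskedPullback, union_inter_distrib_right, union_biUnion]

theorem posSemidef_momentMatrixE_maskedPullback [Fintype α] (E : Finset α)
    (hf : ∀ a, (f a).card ≤ 1) {r r' : ℕ} (hr : r' ≤ r)
    (hy : (Matrix.of fun Ψ₁ Ψ₂ : {S : Finset β // S.card ≤ r} => y (Ψ₁.1 ∪ Ψ₂.1)).PosSemidef) :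
    (momentMatrixE E r' (maskedPullback F f y)).PosSemidef := by
  let g : {S : Finset α // S ⊆ E ∧ S.card ≤ r'} → {S : Finset β // S.card ≤ r} := fun I =>
    ⟨I.1.biUnion f, (card_biUnion_le_card_mul _ _ 1 fun a _ => hf a).trans
      (by simpa using I.2.2.trans hr)⟩
  let d : {S : Finset α // S ⊆ E ∧ S.card ≤ r'} → ℝ := fun I =>
    if (I.1 ∩ F).Nonempty then 0 else 1
  have hfactor : momentMatrixE E r' (maskedPullback F f y) =
      Matrix.diagonal d *
        (Matrix.of fun Ψ₁ Ψ₂ : {S : Finset β // S.card ≤ r} => y (Ψ₁.1 ∪ Ψ₂.1)).submatrix g g *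
        (Matrix.diagonal d).conjTranspose := by
    ext I J
    simp only [momentMatrixE, Matrix.of_apply, maskedPullback_union, Matrix.diagonal_conjTranspose,
      star_trivial, Matrix.diagonal_mul, Matrix.mul_diagonal, Matrix.submatrix_apply, g, d]
    ring
  rw [hfactor]
  exact (hy.submatrix g).mul_mul_conjTranspose_same _

end MaskedPullback

lemma Spanner.card_Phi_le_one {L R Sg : Type} [Fintype Sg] {k K : ℕ}
    (e : Vt L R Sg k K × Vt L R Sg k K) : (Phi e).card ≤ 1 := by
  unfold Phi
  split <;> simp

theorem directed_spanner_moment_matrix_psd_general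
    {L R Sg : Type} [Fintype L] [Fintype R] [Fintype Sg]
    [DecidableEq L] [DecidableEq R] [DecidableEq Sg]
    (Eproj : Finset (L × R)) (π : L → R → Sg → Sg) (σ0 : Sg) (k K : ℕ)
    (r : ℕ) (ystar : Finset ((L ⊕ R) × Sg) → ℝ)
    (hM : (Matrix.of fun Ψ₁ Ψ₂ : {S : Finset ((L ⊕ R) × Sg) // S.card ≤ r + 2} =>
      ystar (Ψ₁.1 ∪ Ψ₂.1)).PosSemidef) :
    (momentMatrixE (Spanner.Edges Eproj π σ0 k K) (r + 2)
      (Spanner.yPrime Eproj k K ystar)).PosSemidef ∧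
    (momentMatrixE (Spanner.Edges Eproj π σ0 k K) (r + 1)
      (Spanner.yPrime Eproj k K ystar)).PosSemidef :=
  ⟨posSemidef_momentMatrixE_maskedPullback _ _ _ _ Spanner.card_Phi_le_one le_rfl hM,
   posSemidef_momentMatrixE_maskedPullback _ _ _ _ Spanner.card_Phi_le_one (Nat.le_succ _) hM⟩

/-- Theorem `main-moment`.  For the directed spanner instance `G = (V,E)`
built (with parameters `k ≥ 2`, `K ≥ 1`) from a projection games instance in which every left
vertex has degree exactly `K`, if the moment matrix `(y*_{Ψ₁∪Ψ₂})_{|Ψ₁|,|Ψ₂| ≤ r+2}` of `y*` is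
positive semidefinite, then the moment matrix `M_{r+2}(y') = (y'_{I∪J})`, indexed by the
subsets `I, J ⊆ E` with `|I|, |J| ≤ r+2`, is positive semidefinite, and so is `M_{r+1}(y')`. -/
theorem directed_spanner_moment_matrix_psd
    {L R Sg : Type} [Fintype L] [Fintype R] [Fintype Sg]
    [DecidableEq L] [DecidableEq R] [DecidableEq Sg]
    (Eproj : Finset (L × R)) (π : L → R → Sg → Sg) (σ0 : Sg) (k K : ℕ)
    (hk : 2 ≤ k) (hK : 1 ≤ K)
    (hdeg : ∀ i : L, (Eproj.filter fun e => e.1 = i).card = K)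
    (r : ℕ) (ystar : Finset ((L ⊕ R) × Sg) → ℝ)
    (hM : (Matrix.of fun Ψ₁ Ψ₂ : {S : Finset ((L ⊕ R) × Sg) // S.card ≤ r + 2} =>
      ystar (Ψ₁.1 ∪ Ψ₂.1)).PosSemidef) :
    (momentMatrixE (Spanner.Edges Eproj π σ0 k K) (r + 2)
      (Spanner.yPrime Eproj k K ystar)).PosSemidef ∧
    (momentMatrixE (Spanner.Edges Eproj π σ0 k K) (r + 1)
      (Spanner.yPrime Eproj k K ystar)).PosSemidef :=
  directed_spanner_moment_matrix_psd_general Eproj π σ0 k K r ystar hM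
end

section
/- Let G = (V,E) be the directed spanner instance built from a projection games instance in which every vertex of L has degree exactly K ≥ 1, with parameter k ≥ 2, let y* be a feasible solution to SDP_Proj^{r+2} (r ≥ 0) satisfying additionally ∑_{(σL,σR)∈π_{i,j}} y*_{{(c_i,σL),(x_j,σR)}} = 1 for every edge {c_i,x_j} ∈ E_Proj, and let y' be built from y*. Then for every edge (u,v) ∈ E_Outer and every z ∈ Z^{u,v} with respect to stretch t = 2k−1, the slack moment matrix with (I,J) entry ∑_{e∈E} z(e)·y'_{I∪J∪{e}} − y'_{I∪J}, indexed by subsets I, J ⊆ E with |I|, |J| ≤ r, is positive semidefinite. -/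
open Finset

/-- A set of (vertex, label) pairs is *inconsistent* if it assigns two different labels to the
same vertex. -/
def Inconsistent {W Sg : Type*} (Ψ : Finset (W × Sg)) : Prop :=
  ∃ v σ σ', σ ≠ σ' ∧ (v, σ) ∈ Ψ ∧ (v, σ') ∈ Ψ

/-- Feasibility for the level-`r` Lasserre SDP for projection games (`SDP_Proj^r`) on the
vertex set `W` (`= L ⊕ R`) with alphabet `Sg`: `y ∅ = 1`, the moment matrix
`(y_{Ψ₁ ∪ Ψ₂})_{|Ψ₁|,|Ψ₂| ≤ r}` is positive semidefinite, and for every vertex `v` and all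
`Ψ₁, Ψ₂` with `|Ψ₁|, |Ψ₂| ≤ r` one has `∑_{σ} y_{Ψ₁∪Ψ₂∪{(v,σ)}} = y_{Ψ₁∪Ψ₂}`. -/
def ProjFeasible {W Sg : Type*} [Fintype W] [Fintype Sg] [DecidableEq W] [DecidableEq Sg]
    (r : ℕ) (y : Finset (W × Sg) → ℝ) : Prop :=
  y ∅ = 1 ∧
  (Matrix.of fun Ψ₁ Ψ₂ : {S : Finset (W × Sg) // S.card ≤ r} => y (Ψ₁.1 ∪ Ψ₂.1)).PosSemidef ∧
  ∀ (v : W) (Ψ₁ Ψ₂ : Finset (W × Sg)), Ψ₁.card ≤ r → Ψ₂.card ≤ r →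
    ∑ σ : Sg, y ((Ψ₁ ∪ Ψ₂) ∪ {(v, σ)}) = y (Ψ₁ ∪ Ψ₂)

/-!
Only index sets avoiding `E_Outer` contribute to the slack form, and on them `y'` is `y*` read
through `Φ`. Hence for a test vector `x` the slack form is `∑_e z_e g(Φ e) - g(∅)`, where
`g Ψ = ∑_{I,J} x'_I x'_J y*_{Ψ ∪ Φ I ∪ Φ J}` and `x'` is `x` with the index sets meeting
`E_Outer` zeroed out. Positive semidefiniteness of the moment matrix makes `g` nonnegative and
marginalizing like `y*` on label sets of size at most two, and since `y*` satisfies the edge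
`{c_i, x_j}` completely, `g` is carried by the pairs `{(c_i, σ), (x_j, π σ)}`.

For every `σ` the path `c_i^l → c_{i,σ} ⇝ x_{j,π σ} → x_j^l` has `2k - 1` edges, so `z` gives
it total weight at least one. Charging `g {(c_i, σ), (x_j, π σ)}` to the edges of this path, the
charges collected by an edge `e` add up to at most `g (Φ e)`, whence `g ∅ ≤ ∑_e z_e g(Φ e)`.
-/

theorem Matrix.PosSemidef.apply_eq_zero_of_diag_eq_zero {n : Type*} [Fintype n]
    {M : Matrix n n ℝ} (hM : M.PosSemidef) {a b : n} (h : M a a = 0) : M a b = 0 := by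
  have hdet := (hM.submatrix ![a, b]).det_nonneg
  have hsymm : M b a = M a b := by simpa using congrFun (congrFun hM.isHermitian a) b
  rw [Matrix.det_fin_two] at hdet
  simp only [Matrix.submatrix_apply, Matrix.cons_val_zero, Matrix.cons_val_one, h, hsymm] at hdet
  nlinarith [sq_nonneg (M a b)]

/-- Weak duality between a packing `w` of the paths `P σ` and a fractional cut `z` of them. -/
theorem Finset.sum_le_sum_mul_of_forall_one_le_sum {ι α : Type*} [Fintype ι]
    [DecidableEq α] {S : Finset α} {P : ι → Finset α} {w : ι → ℝ} {z f : α → ℝ}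
    (hw : ∀ σ, 0 ≤ w σ) (hz : ∀ e ∈ S, 0 ≤ z e) (hPS : ∀ σ, P σ ⊆ S)
    (hP : ∀ σ, 1 ≤ ∑ e ∈ P σ, z e) (hf : ∀ e ∈ S, ∑ σ with e ∈ P σ, w σ ≤ f e) :
    ∑ σ, w σ ≤ ∑ e ∈ S, z e * f e :=
  calc ∑ σ, w σ ≤ ∑ σ, w σ * ∑ e ∈ P σ, z e :=
        sum_le_sum fun σ _ => le_mul_of_one_le_right (hw σ) (hP σ)
    _ = ∑ σ, ∑ e ∈ S, if e ∈ P σ then z e * w σ else 0 := by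
        refine sum_congr rfl fun σ _ => ?_
        rw [sum_ite_mem, inter_eq_right.2 (hPS σ), mul_comm, sum_mul]
    _ = ∑ e ∈ S, z e * ∑ σ with e ∈ P σ, w σ := by
        rw [sum_comm]
        simp only [sum_filter, mul_sum, mul_ite, mul_zero]
    _ ≤ ∑ e ∈ S, z e * f e :=
        sum_le_sum fun e he => mul_le_mul_of_nonneg_left (hf e he) (hz e he)

theorem isHermitian_slackMatrixE {α : Type*} [Fintype α] [DecidableEq α] (E : Finset α)
    (r : ℕ) (y : Finset α → ℝ) (z : α → ℝ) : (slackMatrixE E r y z).IsHermitian := by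
  ext I J
  simp [slackMatrixE, union_comm]

section PairwiseMarginal

variable {W Sg : Type*} [Fintype Sg] [DecidableEq W] [DecidableEq Sg]

def IsPairwiseMarginal (h : Finset (W × Sg) → ℝ) : Prop :=
  (∀ Ψ : Finset (W × Sg), Ψ.card ≤ 2 → 0 ≤ h Ψ) ∧
    ∀ (Ψ : Finset (W × Sg)) (v : W), Ψ.card ≤ 1 → ∑ σ, h (Ψ ∪ {(v, σ)}) = h Ψ

namespace IsPairwiseMarginal

variable {h : Finset (W × Sg) → ℝ} {u w : W} {π : Sg → Sg}

theorem pair_nonneg (hh : IsPairwiseMarginal h) (σ ρ : Sg) : 0 ≤ h {(u, σ), (w, ρ)} :=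
  hh.1 _ card_le_two

theorem sum_pair_left (hh : IsPairwiseMarginal h) (σ : Sg) :
    ∑ ρ, h {(u, σ), (w, ρ)} = h {(u, σ)} :=
  hh.2 {(u, σ)} w (card_singleton _).le

theorem sum_pair_right (hh : IsPairwiseMarginal h) (ρ : Sg) :
    ∑ σ, h {(u, σ), (w, ρ)} = h {(w, ρ)} := by
  simp_rw [← hh.2 {(w, ρ)} u (card_singleton _).le, union_comm]
  rfl

theorem sum_sum_pair (hh : IsPairwiseMarginal h) : ∑ σ, ∑ ρ, h {(u, σ), (w, ρ)} = h ∅ := by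
  simp_rw [hh.sum_pair_left, ← hh.2 ∅ u (by simp), empty_union]

theorem sum_pair_eq_iff (hh : IsPairwiseMarginal h) :
    ∑ σ, h {(u, σ), (w, π σ)} = h ∅ ↔ ∀ σ ρ, ρ ≠ π σ → h {(u, σ), (w, ρ)} = 0 := by
  have hsplit : h ∅ = ∑ σ, h {(u, σ), (w, π σ)} +
      ∑ σ, ∑ ρ ∈ univ.erase (π σ), h {(u, σ), (w, ρ)} := by
    rw [← hh.sum_sum_pair, ← sum_add_distrib]
    exact sum_congr rfl fun σ _ => (add_sum_erase _ _ (mem_univ _)).symm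
  rw [hsplit, left_eq_add, sum_eq_zero_iff_of_nonneg fun σ _ =>
    sum_nonneg fun ρ _ => hh.pair_nonneg σ ρ]
  simp_rw [sum_eq_zero_iff_of_nonneg fun ρ _ => hh.pair_nonneg _ ρ]
  simp

theorem sum_filter_pair_le (hh : IsPairwiseMarginal h) (huw : u ≠ w)
    (hπ : ∀ σ ρ, ρ ≠ π σ → h {(u, σ), (w, ρ)} = 0) {Ψ : Finset (W × Sg)} (hΨ : Ψ.card ≤ 1)
    (p : Sg → Prop) [DecidablePred p] (hp : ∀ σ, p σ → Ψ ⊆ {(u, σ), (w, π σ)}) :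
    ∑ σ with p σ, h {(u, σ), (w, π σ)} ≤ h Ψ := by
  refine (sum_le_sum_of_subset_of_nonneg (monotone_filter_right _ fun σ _ => hp σ)
    fun σ _ _ => hh.pair_nonneg _ _).trans ?_
  obtain h0 | h1 := Nat.le_one_iff_eq_zero_or_eq_one.1 hΨ
  · rw [card_eq_zero.1 h0, filter_true_of_mem fun σ _ => empty_subset _]
    exact (hh.sum_pair_eq_iff.2 hπ).le
  obtain ⟨⟨v, τ⟩, rfl⟩ := card_eq_one.1 h1
  simp only [singleton_subset_iff, mem_insert, mem_singleton, Prod.mk.injEq]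
  by_cases hvu : v = u
  · subst hvu
    simp only [true_and, huw, false_and, or_false]
    rw [sum_filter, sum_ite_eq, if_pos (mem_univ _), ← hh.sum_pair_left]
    exact single_le_sum (fun ρ _ => hh.pair_nonneg τ ρ) (mem_univ _)
  by_cases hvw : v = w
  · subst hvw
    simp only [hvu, false_and, true_and, false_or]
    rw [← hh.sum_pair_right]
    calc ∑ σ with τ = π σ, h {(u, σ), (v, π σ)} = ∑ σ with τ = π σ, h {(u, σ), (v, τ)} :=
          sum_congr rfl fun σ hσ => by rw [← (mem_filter.1 hσ).2]
      _ ≤ ∑ σ, h {(u, σ), (v, τ)} :=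
          sum_le_sum_of_subset_of_nonneg (filter_subset _ _) fun σ _ _ => hh.pair_nonneg σ τ
  · simp only [hvu, hvw, false_and, or_self, filter_false, sum_empty]
    exact hh.1 _ ((card_singleton _).trans_le one_le_two)

end IsPairwiseMarginal

end PairwiseMarginal

namespace ProjFeasible

variable {W Sg : Type*} [Fintype W] [Fintype Sg] [DecidableEq W] [DecidableEq Sg] {N : ℕ}
  {y : Finset (W × Sg) → ℝ}

theorem isPairwiseMarginal (hf : ProjFeasible N y) (hN : 2 ≤ N) : IsPairwiseMarginal y := by
  refine ⟨fun Ψ hΨ => ?_, fun Ψ v hΨ => ?_⟩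
  · simpa using hf.2.1.diag_nonneg (i := ⟨Ψ, hΨ.trans hN⟩)
  · simpa using hf.2.2 v Ψ ∅ (by omega) (by simp)

theorem union_eq_zero (hf : ProjFeasible N y) {A B : Finset (W × Sg)} (hA : A.card ≤ N)
    (hB : B.card ≤ N) (h0 : y A = 0) : y (A ∪ B) = 0 := by
  simpa using Matrix.PosSemidef.apply_eq_zero_of_diag_eq_zero hf.2.1 (a := ⟨A, hA⟩)
    (b := ⟨B, hB⟩) (by simpa using h0)

end ProjFeasible

section MomentForm

variable {W Sg ι : Type*} [Fintype W] [Fintype Sg] [DecidableEq W] [DecidableEq Sg] [Fintype ι]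

def momentForm (y : Finset (W × Sg) → ℝ) (Φ : ι → Finset (W × Sg)) (x : ι → ℝ)
    (Ψ : Finset (W × Sg)) : ℝ :=
  ∑ I, ∑ J, x I * x J * y (Ψ ∪ (Φ I ∪ Φ J))

variable {N : ℕ} {y : Finset (W × Sg) → ℝ} {Φ : ι → Finset (W × Sg)} {x : ι → ℝ}

theorem momentForm_nonneg (hf : ProjFeasible N y) (hΦ : ∀ I, (Φ I).card + 2 ≤ N)
    {Ψ : Finset (W × Sg)} (hΨ : Ψ.card ≤ 2) : 0 ≤ momentForm y Φ x Ψ := by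
  have hpsd := (hf.2.1.submatrix fun I =>
    (⟨Ψ ∪ Φ I, (card_union_le _ _).trans (by have := hΦ I; omega)⟩ :
      {S : Finset (W × Sg) // S.card ≤ N})).dotProduct_mulVec_nonneg x
  refine hpsd.trans_eq ?_
  simp only [momentForm, dotProduct, Matrix.mulVec, Matrix.submatrix_apply, Matrix.of_apply,
    star_trivial, mul_sum]
  exact sum_congr rfl fun I _ => sum_congr rfl fun J _ => by
    rw [← union_union_distrib_left]; ring

theorem isPairwiseMarginal_momentForm (hf : ProjFeasible N y)
    (hΦ : ∀ I, (Φ I).card + 2 ≤ N) : IsPairwiseMarginal (momentForm y Φ x) := by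
  refine ⟨fun Ψ hΨ => momentForm_nonneg hf hΦ hΨ, fun Ψ v hΨ => ?_⟩
  simp only [momentForm]
  rw [sum_comm]
  refine sum_congr rfl fun I _ => ?_
  rw [sum_comm]
  refine sum_congr rfl fun J _ => ?_
  rw [← mul_sum, ← union_assoc, ← hf.2.2 v (Ψ ∪ Φ I) (Φ J)
    ((card_union_le _ _).trans (by have := hΦ I; omega)) (by have := hΦ J; omega)]
  congr 2 with σ
  ac_rfl

theorem momentForm_eq_zero (hf : ProjFeasible N y) (hΦ : ∀ I, (Φ I).card + 2 ≤ N)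
    {Ψ : Finset (W × Sg)} (hΨ : Ψ.card ≤ 2) (h0 : y Ψ = 0) : momentForm y Φ x Ψ = 0 := by
  refine sum_eq_zero fun I _ => sum_eq_zero fun J _ => ?_
  have hI : (Ψ ∪ Φ I).card ≤ N := (card_union_le _ _).trans (by have := hΦ I; omega)
  have hΨI : y (Ψ ∪ Φ I) = 0 :=
    hf.union_eq_zero (by have := hΦ I; omega) (by have := hΦ I; omega) h0
  rw [← union_assoc, hf.union_eq_zero hI (by have := hΦ J; omega) hΨI, mul_zero]

end MomentForm

theorem IsDirPath.nodup {V : Type*} [DecidableEq V] {E : Finset (V × V)} {u v : V}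
    {p : List (V × V)} (hp : IsDirPath E u v p) : p.Nodup :=
  (List.nodup_cons.1 hp.2.2.2.2.2).2.of_map _

namespace Spanner

section PathEdges

variable {V : Type*}

theorem pathEdges_cons_cons (a b : V) (l : List V) :
    pathEdges (a :: b :: l) = (a, b) :: pathEdges (b :: l) := rfl

theorem pathEdges_append_singleton : ∀ (l : List V) (b : V) (hl : l ≠ []),
    pathEdges (l ++ [b]) = pathEdges l ++ [(l.getLast hl, b)]
  | [_], _, _ => rfl
  | a :: c :: l, b, _ => by
    rw [List.cons_append, List.cons_append, pathEdges_cons_cons, ← List.cons_append,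
      pathEdges_append_singleton (c :: l) b (List.cons_ne_nil _ _), List.getLast_cons_cons,
      pathEdges_cons_cons, List.cons_append]

theorem map_snd_pathEdges (vs : List V) : (pathEdges vs).map Prod.snd = vs.tail :=
  List.map_snd_zip (by cases vs <;> simp)

theorem length_pathEdges (vs : List V) : (pathEdges vs).length = vs.length - 1 := by
  simp [pathEdges]

theorem isChain_pathEdges : ∀ vs : List V, (pathEdges vs).IsChain fun e f => e.2 = f.1
  | [] | [_] | [_, _] => by simp [pathEdges]
  | a :: b :: c :: l => by
    rw [pathEdges_cons_cons, pathEdges_cons_cons, List.isChain_cons_cons]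
    exact ⟨rfl, pathEdges_cons_cons b c l ▸ isChain_pathEdges (b :: c :: l)⟩

theorem isDirPath_pathEdges [DecidableEq V] {E : Finset (V × V)} {u v : V} {vs : List V}
    (hvs : vs ≠ []) (hnd : (u :: vs).Nodup) (hlast : vs.getLast hvs = v)
    (hE : ∀ e ∈ pathEdges (u :: vs), e ∈ E) : IsDirPath E u v (pathEdges (u :: vs)) := by
  obtain ⟨w, ws, rfl⟩ := List.exists_cons_of_ne_nil hvs
  refine ⟨by simp [pathEdges_cons_cons], hE, rfl, ?_, isChain_pathEdges _, ?_⟩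
  · rw [← List.getLast?_map, map_snd_pathEdges, List.tail_cons,
      List.getLast?_eq_some_getLast hvs, hlast]
  · rwa [map_snd_pathEdges]

end PathEdges

open SpV

variable {L R Sg : Type} [Fintype Sg] {k K : ℕ}

theorem card_phi_le_one (e : Vt L R Sg k K × Vt L R Sg k K) : (Phi e).card ≤ 1 := by
  unfold Phi; split <;> simp

theorem card_biUnion_phi_le [DecidableEq L] [DecidableEq R] [DecidableEq Sg]
    (S : Finset (Vt L R Sg k K × Vt L R Sg k K)) : (S.biUnion Phi).card ≤ S.card :=
  (card_biUnion_le_card_mul _ _ 1 fun e _ => card_phi_le_one e).trans_eq (mul_one _)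

theorem phi_eq_empty {e : Vt L R Sg k K × Vt L R Sg k K} (h1 : ∀ i l, e.1 ≠ cDup i l)
    (h2 : ∀ j l, e.2 ≠ xDup j l) : Phi e = ∅ := by
  unfold Phi
  split
  · exact (h1 _ _ rfl).elim
  · exact (h2 _ _ rfl).elim
  · rfl

theorem mem_midVerts {i : L} {j : R} {σL σR : Sg} {v : Vt L R Sg k K} :
    v ∈ midVerts k K i j σL σR ↔
      v = cLab i σL ∨ (∃ t, mid i j σL σR t = v) ∨ v = xLab j σR := by
  simp [midVerts]

def canonicalVerts (k K : ℕ) (i : L) (j : R) (l : Fin (numDup Sg k K)) (σL σR : Sg) :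
    List (Vt L R Sg k K) :=
  cDup i l :: (midVerts k K i j σL σR ++ [xDup j l])

def canonicalPath (k K : ℕ) (i : L) (j : R) (l : Fin (numDup Sg k K)) (σL σR : Sg) :
    List (Vt L R Sg k K × Vt L R Sg k K) :=
  pathEdges (canonicalVerts k K i j l σL σR)

variable {i : L} {j : R} {l : Fin (numDup Sg k K)} {σL σR : Sg}

theorem canonicalPath_eq : canonicalPath k K i j l σL σR =
    (cDup i l, cLab i σL) :: (EMpath k K i j σL σR ++ [(xLab j σR, xDup j l)]) := by
  have hne : midVerts k K i j σL σR ≠ [] := List.cons_ne_nil _ _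
  have hlast : (midVerts k K i j σL σR).getLast hne = xLab j σR := by simp [midVerts]
  calc canonicalPath k K i j l σL σR
      = (cDup i l, cLab i σL) :: pathEdges (midVerts k K i j σL σR ++ [xDup j l]) := rfl
    _ = _ := by rw [pathEdges_append_singleton _ _ hne, hlast, EMpath]

theorem length_canonicalPath (hk : 2 ≤ k) :
    (canonicalPath k K i j l σL σR).length = 2 * k - 1 := by
  simp [canonicalPath, canonicalVerts, length_pathEdges, midVerts]
  omega

theorem nodup_canonicalVerts :
    (canonicalVerts k K i j l σL σR).Nodup := by
  simp [canonicalVerts, midVerts, List.nodup_append, cDup, cLab, mid, xLab, xDup]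
  exact (List.nodup_finRange _).map fun a b h => by simpa using h

theorem mem_midVerts_of_mem_EMpath {e : Vt L R Sg k K × Vt L R Sg k K}
    (he : e ∈ EMpath k K i j σL σR) :
    e.1 ∈ midVerts k K i j σL σR ∧ e.2 ∈ midVerts k K i j σL σR :=
  ⟨(List.of_mem_zip he).1, List.mem_of_mem_tail (List.of_mem_zip he).2⟩

theorem phi_subset_of_mem_canonicalPath [DecidableEq L] [DecidableEq R] [DecidableEq Sg]
    {e : Vt L R Sg k K × Vt L R Sg k K} (he : e ∈ canonicalPath k K i j l σL σR) :
    Phi e ⊆ {(Sum.inl i, σL), (Sum.inr j, σR)} := by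
  simp only [canonicalPath_eq, List.mem_cons, List.mem_append, List.not_mem_nil,
    or_false] at he
  rcases he with rfl | he | rfl
  · simp [Phi, cDup, cLab]
  · obtain ⟨h1, h2⟩ := mem_midVerts_of_mem_EMpath he
    rw [phi_eq_empty (fun i' l' h => by simp_all [mem_midVerts, cDup, cLab, mid, xLab])
      (fun j' l' h => by simp_all [mem_midVerts, xDup, cLab, mid, xLab])]
    exact empty_subset _
  · simp [Phi, xDup, xLab]

variable [Fintype L] [Fintype R] [DecidableEq L] [DecidableEq R] [DecidableEq Sg]

theorem mem_edges_sdiff_of_mem_canonicalPath {Eproj : Finset (L × R)} {π : L → R → Sg → Sg}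
    {σ0 : Sg} (hij : (i, j) ∈ Eproj) {e : Vt L R Sg k K × Vt L R Sg k K}
    (he : e ∈ canonicalPath k K i j l σL (π i j σL)) :
    e ∈ Edges Eproj π σ0 k K \ EOuter Sg Eproj k K := by
  simp only [canonicalPath_eq, List.mem_cons, List.mem_append, List.not_mem_nil,
    or_false] at he
  rcases he with rfl | he | rfl
  · simp [Edges, ELedges, EOuter, cDup, cLab, xDup]
  · have hmid : e ∈ EMedges Eproj π k K :=
      mem_biUnion.2 ⟨(i, j), hij, mem_biUnion.2 ⟨σL, mem_univ _, List.mem_toFinset.2 he⟩⟩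
    refine mem_sdiff.2 ⟨by simp [Edges, hmid], fun ho => ?_⟩
    obtain ⟨p, -, rfl⟩ := mem_image.1 ho
    rcases mem_midVerts.1 (mem_midVerts_of_mem_EMpath he).1 with h1 | ⟨t, h1⟩ | h1 <;>
      simp [cDup, cLab, mid, xLab] at h1
  · simp [Edges, ERedges, EOuter, cDup, xLab, xDup]

theorem isDirPath_canonicalPath {Eproj : Finset (L × R)} (π : L → R → Sg → Sg) (σ0 : Sg)
    (hij : (i, j) ∈ Eproj) (σ : Sg) :
    IsDirPath (Edges Eproj π σ0 k K) (cDup i l) (xDup j l)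
      (canonicalPath k K i j l σ (π i j σ)) :=
  isDirPath_pathEdges (by simp) nodup_canonicalVerts (by simp) fun _ he =>
    (mem_sdiff.1 (mem_edges_sdiff_of_mem_canonicalPath hij he)).1

theorem le_sum_mul_phi_of_inZ (hk : 2 ≤ k) {Eproj : Finset (L × R)} {π : L → R → Sg → Sg}
    {σ0 : Sg} {h : Finset ((L ⊕ R) × Sg) → ℝ} (hh : IsPairwiseMarginal h)
    (hπ : ∀ σ ρ, ρ ≠ π i j σ → h {(Sum.inl i, σ), (Sum.inr j, ρ)} = 0)
    (hij : (i, j) ∈ Eproj) {z : Vt L R Sg k K × Vt L R Sg k K → ℝ}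
    (hz : InZ (Edges Eproj π σ0 k K) (2 * k - 1) (cDup i l) (xDup j l) z) :
    h ∅ ≤ ∑ e ∈ Edges Eproj π σ0 k K \ EOuter Sg Eproj k K, z e * h (Phi e) := by
  rw [← hh.sum_pair_eq_iff.2 hπ]
  refine sum_le_sum_mul_of_forall_one_le_sum
    (P := fun σ => (canonicalPath k K i j l σ (π i j σ)).toFinset)
    (fun σ => hh.pair_nonneg σ _) (fun e he => (hz.1 e (mem_sdiff.1 he).1).1)
    (fun σ e he => mem_edges_sdiff_of_mem_canonicalPath hij (List.mem_toFinset.1 he))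
    (fun σ => ?_) (fun e _ => hh.sum_filter_pair_le (by simp) hπ (card_phi_le_one e) _
      fun σ he => phi_subset_of_mem_canonicalPath (List.mem_toFinset.1 he))
  have hpath := isDirPath_canonicalPath (l := l) π σ0 hij σ
  rw [List.sum_toFinset _ hpath.nodup]
  exact hz.2 _ hpath (length_canonicalPath hk).le

section YPrime

open scoped Matrix

variable {Eproj : Finset (L × R)} {ystar : Finset ((L ⊕ R) × Sg) → ℝ}

theorem EOuter_subset_edges {π : L → R → Sg → Sg} {σ0 : Sg} :
    EOuter Sg Eproj k K ⊆ Edges Eproj π σ0 k K :=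
  subset_union_right

theorem yPrime_eq_zero {S : Finset (Vt L R Sg k K × Vt L R Sg k K)}
    (h : (S ∩ EOuter Sg Eproj k K).Nonempty) : yPrime Eproj k K ystar S = 0 :=
  if_pos h

theorem yPrime_insert {S : Finset (Vt L R Sg k K × Vt L R Sg k K)}
    (h : ¬(S ∩ EOuter Sg Eproj k K).Nonempty) {e : Vt L R Sg k K × Vt L R Sg k K}
    (he : e ∉ EOuter Sg Eproj k K) :
    yPrime Eproj k K ystar (insert e S) = ystar (Phi e ∪ S.biUnion Phi) := by
  rw [yPrime, if_neg (by rwa [insert_inter_of_notMem he]), biUnion_insert]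

theorem sum_mul_yPrime_insert_sub_yPrime {E : Finset (Vt L R Sg k K × Vt L R Sg k K)}
    (hE : EOuter Sg Eproj k K ⊆ E) (z : Vt L R Sg k K × Vt L R Sg k K → ℝ)
    (S : Finset (Vt L R Sg k K × Vt L R Sg k K)) :
    ∑ e ∈ E, z e * yPrime Eproj k K ystar (insert e S) - yPrime Eproj k K ystar S =
      if (S ∩ EOuter Sg Eproj k K).Nonempty then 0 else
        ∑ e ∈ E \ EOuter Sg Eproj k K, z e * ystar (Phi e ∪ S.biUnion Phi) -
          ystar (S.biUnion Phi) := by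
  split_ifs with h
  · have hins : ∀ e, ((insert e S) ∩ EOuter Sg Eproj k K).Nonempty := fun e =>
      h.mono (inter_subset_inter_right (subset_insert _ _))
    simp [yPrime_eq_zero h, yPrime_eq_zero (hins _)]
  · rw [← sum_sdiff hE, sum_eq_zero (s := EOuter Sg Eproj k K) fun e he => by
      rw [yPrime_eq_zero ⟨e, mem_inter.2 ⟨mem_insert_self _ _, he⟩⟩, mul_zero], add_zero,
      yPrime, if_neg h]
    exact congrArg (· - _) (sum_congr rfl fun e he => by
      rw [yPrime_insert h (mem_sdiff.1 he).2])

theorem exists_dotProduct_slackMatrixE_yPrime {E : Finset (Vt L R Sg k K × Vt L R Sg k K)}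
    (hE : EOuter Sg Eproj k K ⊆ E) (r : ℕ) (z : Vt L R Sg k K × Vt L R Sg k K → ℝ)
    (x : {S // S ⊆ E ∧ S.card ≤ r} → ℝ) :
    ∃ x' : {S // S ⊆ E ∧ S.card ≤ r} → ℝ,
      star x ⬝ᵥ (slackMatrixE E r (yPrime Eproj k K ystar) z *ᵥ x) =
        ∑ e ∈ E \ EOuter Sg Eproj k K,
            z e * momentForm ystar (fun I => I.1.biUnion Phi) x' (Phi e) -
          momentForm ystar (fun I => I.1.biUnion Phi) x' ∅ := by
  set x' : {S // S ⊆ E ∧ S.card ≤ r} → ℝ :=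
    fun I => if (I.1 ∩ EOuter Sg Eproj k K).Nonempty then 0 else x I with hx'
  refine ⟨x', ?_⟩
  calc star x ⬝ᵥ (slackMatrixE E r (yPrime Eproj k K ystar) z *ᵥ x)
      = ∑ I, ∑ J, x I * x J * (∑ e ∈ E, z e * yPrime Eproj k K ystar (insert e (I.1 ∪ J.1)) -
          yPrime Eproj k K ystar (I.1 ∪ J.1)) := by
        simp only [dotProduct, Matrix.mulVec, slackMatrixE, Matrix.of_apply, star_trivial,
          mul_sum]
        exact sum_congr rfl fun I _ => sum_congr rfl fun J _ => by ring
    _ = ∑ I, ∑ J, x' I * x' J * (∑ e ∈ E \ EOuter Sg Eproj k K,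
          z e * ystar (Phi e ∪ (I.1.biUnion Phi ∪ J.1.biUnion Phi)) -
            ystar (∅ ∪ (I.1.biUnion Phi ∪ J.1.biUnion Phi))) := by
        refine sum_congr rfl fun I _ => sum_congr rfl fun J _ => ?_
        simp only [sum_mul_yPrime_insert_sub_yPrime hE, union_inter_distrib_right,
          union_nonempty, union_biUnion, empty_union]
        by_cases hI : (I.1 ∩ EOuter Sg Eproj k K).Nonempty <;>
          by_cases hJ : (J.1 ∩ EOuter Sg Eproj k K).Nonempty <;> simp [hx', hI, hJ]
    _ = _ := by
        simp only [momentForm, mul_sub, sum_sub_distrib, mul_sum]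
        congr 1
        symm
        rw [sum_comm]
        refine sum_congr rfl fun I _ => ?_
        rw [sum_comm]
        exact sum_congr rfl fun J _ => sum_congr rfl fun e _ => by ring

end YPrime

end Spanner

theorem directed_spanner_slack_psd_outer_edges_general
    {L R Sg : Type} [Fintype L] [Fintype R] [Fintype Sg]
    [DecidableEq L] [DecidableEq R] [DecidableEq Sg]
    (Eproj : Finset (L × R)) (π : L → R → Sg → Sg) (σ0 : Sg) (k K : ℕ)
    (hk : 2 ≤ k)
    (r : ℕ) (ystar : Finset ((L ⊕ R) × Sg) → ℝ)
    (hfeas : ProjFeasible (r + 2) ystar)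
    (hsat : ∀ e ∈ Eproj,
      ∑ σL : Sg, ystar {(Sum.inl e.1, σL), (Sum.inr e.2, π e.1 e.2 σL)} = 1) :
    ∀ e ∈ Spanner.EOuter Sg Eproj k K,
      ∀ z : Spanner.Vt L R Sg k K × Spanner.Vt L R Sg k K → ℝ,
        InZ (Spanner.Edges Eproj π σ0 k K) (2 * k - 1) e.1 e.2 z →
        (slackMatrixE (Spanner.Edges Eproj π σ0 k K) r
          (Spanner.yPrime Eproj k K ystar) z).PosSemidef := by
  rintro _ he z hz
  obtain ⟨⟨⟨i, j⟩, l⟩, hp, rfl⟩ := mem_image.1 he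
  have hij : (i, j) ∈ Eproj := (mem_product.1 hp).1
  refine .of_dotProduct_mulVec_nonneg (isHermitian_slackMatrixE _ _ _ _) fun x => ?_
  obtain ⟨x', hx'⟩ := Spanner.exists_dotProduct_slackMatrixE_yPrime (ystar := ystar)
    Spanner.EOuter_subset_edges r z x
  rw [hx', sub_nonneg]
  have hΦ : ∀ I : {S // S ⊆ Spanner.Edges Eproj π σ0 k K ∧ S.card ≤ r},
      (I.1.biUnion Spanner.Phi).card + 2 ≤ r + 2 :=
    fun I => by have := (Spanner.card_biUnion_phi_le I.1).trans I.2.2; omega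
  have hπ : ∀ σ ρ, ρ ≠ π i j σ → momentForm ystar (fun I => I.1.biUnion Spanner.Phi) x'
      {(Sum.inl i, σ), (Sum.inr j, ρ)} = 0 := fun σ ρ hρ =>
    momentForm_eq_zero hfeas hΦ card_le_two <|
      (hfeas.isPairwiseMarginal (by omega)).sum_pair_eq_iff.1 (by rw [hsat _ hij, hfeas.1]) σ ρ hρ
  exact Spanner.le_sum_mul_phi_of_inZ hk (isPairwiseMarginal_momentForm hfeas hΦ) hπ hij hz

/-- Theorem `Eouter`.  For the directed spanner instance `G = (V,E)` built
(with parameters `k ≥ 2`, `K ≥ 1`) from a projection games instance in which every left vertex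
has degree exactly `K`, and the fractional solution `y'` built from a feasible solution `y*`
of `SDP_Proj^{r+2}` which moreover satisfies every edge of the projection game completely
(`∑_{(σL,σR)∈π_{i,j}} y*_{{(c_i,σL),(x_j,σR)}} = 1`): for every edge `(u,v) ∈ E_Outer` and
every `z ∈ Z^{u,v}` (with respect to stretch `2k−1`), the slack moment matrix
`(∑_{e∈E} z e · y'_{I∪J∪{e}} − y'_{I∪J})_{I,J ⊆ E, |I|,|J| ≤ r}` is positive semidefinite. -/
theorem directed_spanner_slack_psd_outer_edges
    {L R Sg : Type} [Fintype L] [Fintype R] [Fintype Sg]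
    [DecidableEq L] [DecidableEq R] [DecidableEq Sg]
    (Eproj : Finset (L × R)) (π : L → R → Sg → Sg) (σ0 : Sg) (k K : ℕ)
    (hk : 2 ≤ k) (hK : 1 ≤ K)
    (hdeg : ∀ i : L, (Eproj.filter fun e => e.1 = i).card = K)
    (r : ℕ) (ystar : Finset ((L ⊕ R) × Sg) → ℝ)
    (hfeas : ProjFeasible (r + 2) ystar)
    (hsat : ∀ e ∈ Eproj,
      ∑ σL : Sg, ystar {(Sum.inl e.1, σL), (Sum.inr e.2, π e.1 e.2 σL)} = 1) :
    ∀ e ∈ Spanner.EOuter Sg Eproj k K,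
      ∀ z : Spanner.Vt L R Sg k K × Spanner.Vt L R Sg k K → ℝ,
        InZ (Spanner.Edges Eproj π σ0 k K) (2 * k - 1) e.1 e.2 z →
        (slackMatrixE (Spanner.Edges Eproj π σ0 k K) r
          (Spanner.yPrime Eproj k K ystar) z).PosSemidef :=
  directed_spanner_slack_psd_outer_edges_general Eproj π σ0 k K hk r ystar hfeas hsat
end

section
/- Let G = (V,E) be the directed spanner instance built from a projection games instance in which every vertex of L has degree exactly K ≥ 1, with parameter k ≥ 2, and assume in addition that: a := m/n ≥ 1; every vertex of R has degree at most 2·K·a in E_Proj; a ≤ 12·K^{1/2}; and every assignment α : L∪R → Σ satisfies fewer than m·a/576 edges of E_Proj (where α satisfies {c_i,x_j} if π_{i,j}(α(c_i)) = α(x_j)). Then every (2k−1)-spanner of G has at least n·k·K^{3/2}·|Σ| edges. -/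
open Finset

/-!
Fix a duplicate index `l`. The outer edge `(c_i^l, x_j^l)` is spanned either by itself or by a
path that starts with some `(c_i^l, c_{i,σ})` and ends with some `(x_{j,τ}, x_j^l)`. The part in
between has at most `2k - 3` edges, while the depth of a vertex (its distance to the right labels
along the middle paths) drops by at most one per edge and by one only along middle paths; so it is
the middle path of `(σ, π_{i,j}(σ))` and `τ = π_{i,j}(σ)`. Hence the labels `S` picks for the
`c_i` and `x_j` in layer `l` (nonempty, since `E_L` and `E_R` must be spanned), together with the
outer edges of layer `l` in `S`, cover all of `E_Proj`.

If such a cover had fewer than `n √K` elements, then `√K > a + 1`, and after discarding the edges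
in `O` and, by Markov's inequality, the edges at vertices with more than `6√K / a` resp. `12√K`
labels, at least `mK/6` edges would remain. A uniformly random labelling drawn from the label
sets satisfies each of them with probability at least `a / (72K)`, hence some labelling satisfies
more than `ma/576` edges, contradicting soundness. The `kK|Σ|` layers are edge-disjoint.
-/

section Walk

variable {V : Type*}

/-- `p` is the edge list of a walk from `u` to `v` in `E` (unlike `IsDirPath`, vertices may
repeat). -/
def IsWalk (E : Finset (V × V)) : V → V → List (V × V) → Prop
  | u, v, [] => u = v
  | u, v, e :: p => e.1 = u ∧ e ∈ E ∧ IsWalk E e.2 v p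

variable {E F : Finset (V × V)} {u v : V} {p : List (V × V)}

@[simp] lemma isWalk_nil : IsWalk E u v [] ↔ u = v := Iff.rfl

@[simp] lemma isWalk_cons {e : V × V} :
    IsWalk E u v (e :: p) ↔ e.1 = u ∧ e ∈ E ∧ IsWalk E e.2 v p := Iff.rfl

lemma isWalk_append {q : List (V × V)} {w : V} :
    IsWalk E u w (p ++ q) ↔ ∃ v, IsWalk E u v p ∧ IsWalk E v w q := by
  induction p generalizing u with
  | nil => simp
  | cons e p ih => simp [ih, and_assoc]

lemma isWalk_concat {e : V × V} :
    IsWalk E u v (p ++ [e]) ↔ IsWalk E u e.1 p ∧ e ∈ E ∧ e.2 = v := by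
  simp [isWalk_append]

lemma IsWalk.mono (h : E ⊆ F) (hp : IsWalk E u v p) : IsWalk F u v p := by
  induction p generalizing u with
  | nil => exact hp
  | cons e p ih => exact ⟨hp.1, h hp.2.1, ih hp.2.2⟩

lemma IsWalk.ne_nil (hp : IsWalk E u v p) (huv : u ≠ v) : p ≠ [] := by
  rintro rfl
  exact huv hp

lemma IsWalk.eq_nil_of_forall_fst_ne (hp : IsWalk E u v p) (hu : ∀ e ∈ E, e.1 ≠ u) :
    p = [] ∧ u = v := by
  cases p with
  | nil => exact ⟨rfl, hp⟩
  | cons e p => exact absurd hp.1 (hu e hp.2.1)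

lemma IsWalk.eq_nil_of_forall_snd_ne (hp : IsWalk E u v p) (hv : ∀ e ∈ E, e.2 ≠ v) :
    p = [] ∧ u = v := by
  induction p generalizing u with
  | nil => exact ⟨rfl, hp⟩
  | cons e p ih => exact absurd (ih hp.2.2).2 (hv e hp.2.1)

lemma IsWalk.invariant {I : V → Prop} (hp : IsWalk E u v p) (hI : ∀ e ∈ p, I e.1 → I e.2)
    (hu : I u) : I v := by
  induction p generalizing u with
  | nil => exact hp ▸ hu
  | cons e p ih =>
    exact ih hp.2.2 (fun f hf => hI f (List.mem_cons_of_mem e hf))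
      (hI e List.mem_cons_self (hp.1 ▸ hu))

lemma IsWalk.le_add_countP [DecidableEq V] {φ : V → ℕ} {F : Finset (V × V)}
    (hφ : ∀ e ∈ E, φ e.1 ≤ φ e.2 + if e ∈ F then 1 else 0) (hp : IsWalk E u v p) :
    φ u ≤ φ v + p.countP (· ∈ F) := by
  induction p generalizing u with
  | nil => rw [isWalk_nil.1 hp]; omega
  | cons e p ih =>
    obtain ⟨rfl, he, hp⟩ := hp
    have hrest := ih hp
    have hstep := hφ e he
    rw [List.countP_cons]
    by_cases h : e ∈ F <;>
      simp only [h, if_true, if_false, decide_true, decide_false] at hstep ⊢ <;> omega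

lemma IsWalk.forall_mem_of_le [DecidableEq V] {φ : V → ℕ} {F : Finset (V × V)}
    (hφ : ∀ e ∈ E, φ e.1 ≤ φ e.2 + if e ∈ F then 1 else 0) (hp : IsWalk E u v p)
    (h : φ v + p.length ≤ φ u) : ∀ e ∈ p, e ∈ F := by
  have hcount : p.countP (· ∈ F) = p.length :=
    le_antisymm (List.countP_le_length) (by have := hp.le_add_countP hφ; omega)
  simpa using List.countP_eq_length.1 hcount

lemma IsDirPath.isWalk [DecidableEq V] (hp : IsDirPath E u v p) : IsWalk E u v p := by
  obtain ⟨hne, hmem, hhd, hlast, hch, -⟩ := hp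
  induction p generalizing u with
  | nil => exact absurd rfl hne
  | cons e p ih =>
    simp only [List.head?_cons, Option.map_some, Option.some.injEq] at hhd
    refine ⟨hhd, hmem e List.mem_cons_self, ?_⟩
    cases p with
    | nil => simpa using hlast
    | cons f p =>
      obtain ⟨hef, hch⟩ := List.isChain_cons_cons.1 hch
      exact ih (List.cons_ne_nil f p) (fun g hg => hmem g (List.mem_cons_of_mem e hg))
        (by simp [hef]) (by simpa using hlast) hch

end Walk

section Counting

open Fintype in
lemma card_piFinset_eq_card_filter_mul {ι : Type*} [DecidableEq ι] [Fintype ι] {δ : ι → Type*}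
    [∀ i, DecidableEq (δ i)] (s : ∀ i, Finset (δ i)) {i : ι} {a : δ i} (ha : a ∈ s i) :
    #(piFinset s) = #{f ∈ piFinset s | f i = a} * #(s i) := by
  rw [← piFinset_update_singleton_eq_filter_piFinset_eq s i ha, card_piFinset, card_piFinset]
  simp_rw [Function.apply_update (fun j (t : Finset (δ j)) => #t), card_singleton]
  rw [prod_update_of_mem (mem_univ i), one_mul, prod_eq_prod_sdiff_singleton_mul (mem_univ i)]

open Fintype in
lemma card_piFinset_eq_card_filter_mul_mul {ι : Type*} [DecidableEq ι] [Fintype ι]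
    {δ : ι → Type*} [∀ i, DecidableEq (δ i)] (s : ∀ i, Finset (δ i)) {i j : ι} (hij : i ≠ j)
    {a : δ i} {b : δ j} (ha : a ∈ s i) (hb : b ∈ s j) :
    #(piFinset s) = #{f ∈ piFinset s | f i = a ∧ f j = b} * #(s i) * #(s j) := by
  have hb' : b ∈ Function.update s i {a} j := by rwa [Function.update_of_ne hij.symm]
  rw [card_piFinset_eq_card_filter_mul s ha,
    ← piFinset_update_singleton_eq_filter_piFinset_eq s i ha,
    card_piFinset_eq_card_filter_mul _ hb', piFinset_update_singleton_eq_filter_piFinset_eq s i ha,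
    filter_filter, Function.update_of_ne hij.symm]
  ring

lemma card_filter_lt_lt_of_sum_lt {α : Type*} (s : Finset α) (f : α → ℝ)
    (hf : ∀ x ∈ s, 0 ≤ f x) {t c : ℝ} (ht : 0 < t) (h : ∑ x ∈ s, f x < c * t) :
    #{x ∈ s | t < f x} < c := by
  refine lt_of_mul_lt_mul_right (lt_of_le_of_lt ?_ h) ht.le
  calc #{x ∈ s | t < f x} * t = ∑ _x ∈ {x ∈ s | t < f x}, t := by simp
    _ ≤ ∑ x ∈ {x ∈ s | t < f x}, f x := sum_le_sum fun x hx => (mem_filter.1 hx).2.le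
    _ ≤ ∑ x ∈ s, f x :=
        sum_le_sum_of_subset_of_nonneg (filter_subset _ _) fun x hx _ => hf x hx

lemma card_filter_mem_le_mul {α β : Type*} [DecidableEq β] (s : Finset α) (f : α → β)
    (X : Finset β) {d : ℝ} (hd : ∀ b ∈ X, (#{a ∈ s | f a = b} : ℝ) ≤ d) :
    (#{a ∈ s | f a ∈ X} : ℝ) ≤ #X * d := by
  rw [card_eq_sum_card_fiberwise (s := {a ∈ s | f a ∈ X}) (t := X)
    fun a ha => (mem_filter.1 ha).2]
  push_cast
  calc ∑ b ∈ X, (#{a ∈ {a ∈ s | f a ∈ X} | f a = b} : ℝ)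
      ≤ ∑ b ∈ X, (#{a ∈ s | f a = b} : ℝ) := by
        gcongr with b
        intro a
        simp only [mem_filter]
        tauto
    _ ≤ #X * d := by simpa using sum_le_card_nsmul X _ d hd

lemma card_le_card_filter_not_add {α : Type*} [DecidableEq α] (s : Finset α) (p q r : α → Prop)
    [DecidablePred p] [DecidablePred q] [DecidablePred r] :
    #s ≤ #{x ∈ s | ¬p x ∧ ¬q x ∧ ¬r x} + #{x ∈ s | p x} + #{x ∈ s | q x} + #{x ∈ s | r x} := by
  calc #s ≤ #({x ∈ s | ¬p x ∧ ¬q x ∧ ¬r x} ∪ {x ∈ s | p x} ∪ {x ∈ s | q x} ∪ {x ∈ s | r x}) := by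
        refine card_le_card fun x hx => ?_
        simp only [mem_union, mem_filter]
        tauto
    _ ≤ _ := by
        grw [card_union_le, card_union_le, card_union_le]

end Counting

namespace ProjectionGame

variable {L R Sg : Type} [Fintype L] [Fintype R] [DecidableEq L] [DecidableEq R]
    {Eproj : Finset (L × R)} {K : ℕ}

omit [DecidableEq L] [DecidableEq R] in
lemma card_right_pos_and_le (ha : 1 ≤ (Fintype.card L : ℝ) / (Fintype.card R : ℝ)) :
    0 < (Fintype.card R : ℝ) ∧ (Fintype.card R : ℝ) ≤ Fintype.card L :=
  (one_le_div_iff.1 ha).resolve_right fun h => h.1.not_ge (Nat.cast_nonneg _)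

omit [DecidableEq R] in
/-- Markov's inequality on the label counts, then the degree bound. -/
lemma card_heavy_left_lt (hdeg : ∀ i : L, (Eproj.filter fun e => e.1 = i).card = K)
    (ha : 1 ≤ (Fintype.card L : ℝ) / (Fintype.card R : ℝ)) (hs : 0 < Real.sqrt K)
    (A : L → Finset Sg) (hA : ∑ i, (#(A i) : ℝ) < Fintype.card R * Real.sqrt K) :
    (#{e ∈ Eproj | 6 * Real.sqrt K / ((Fintype.card L : ℝ) / Fintype.card R) < #(A e.1)} : ℝ) <
      Fintype.card L * K / 6 := by
  set m : ℝ := (Fintype.card L : ℝ)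
  set a := m / (Fintype.card R : ℝ)
  obtain ⟨hn, hnm⟩ := card_right_pos_and_le ha
  have hm : m / 6 * (6 * Real.sqrt K / a) = Fintype.card R * Real.sqrt K := by
    have : m ≠ 0 := (hn.trans_le hnm).ne'
    simp only [a]
    field_simp
  have hheavy := card_filter_lt_lt_of_sum_lt univ (fun i => (#(A i) : ℝ))
    (fun _ _ => Nat.cast_nonneg _) (t := 6 * Real.sqrt K / a) (by positivity) (hm ▸ hA)
  have hK : (0 : ℝ) < K := Real.sqrt_pos.1 hs
  calc _ = (#{e ∈ Eproj | e.1 ∈ ({i | 6 * Real.sqrt K / a < #(A i)} : Finset L)} : ℝ) := by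
        simp
    _ ≤ (#{i | 6 * Real.sqrt K / a < #(A i)} : ℝ) * K :=
        card_filter_mem_le_mul Eproj Prod.fst _ fun i _ => by simp [hdeg]
    _ < m / 6 * K := by gcongr
    _ = m * K / 6 := by ring

omit [DecidableEq L] in
lemma card_heavy_right_lt
    (hdegR : ∀ j : R, ((Eproj.filter fun e => e.2 = j).card : ℝ) ≤
      2 * K * ((Fintype.card L : ℝ) / (Fintype.card R : ℝ)))
    (ha : 1 ≤ (Fintype.card L : ℝ) / (Fintype.card R : ℝ)) (hs : 0 < Real.sqrt K)
    (B : R → Finset Sg) (hB : ∑ j, (#(B j) : ℝ) < Fintype.card R * Real.sqrt K) :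
    (#{e ∈ Eproj | 12 * Real.sqrt K < #(B e.2)} : ℝ) < Fintype.card L * K / 6 := by
  set n : ℝ := (Fintype.card R : ℝ)
  set a := (Fintype.card L : ℝ) / n
  have hn : 0 < n := (card_right_pos_and_le ha).1
  have hheavy := card_filter_lt_lt_of_sum_lt univ (fun j => (#(B j) : ℝ))
    (fun _ _ => Nat.cast_nonneg _) (t := 12 * Real.sqrt K) (by positivity) (c := n / 12)
    (by linarith)
  have hK : (0 : ℝ) < 2 * K * a := by have := Real.sqrt_pos.1 hs; positivity
  calc _ = (#{e ∈ Eproj | e.2 ∈ ({j | 12 * Real.sqrt K < #(B j)} : Finset R)} : ℝ) := by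
        simp
    _ ≤ (#{j | 12 * Real.sqrt K < #(B j)} : ℝ) * (2 * K * a) :=
        card_filter_mem_le_mul Eproj Prod.snd _ fun j _ => by simpa using hdegR j
    _ < n / 12 * (2 * K * a) := by gcongr
    _ = Fintype.card L * K / 6 := by simp only [a]; field_simp; ring

lemma card_light_edges_ge (hdeg : ∀ i : L, (Eproj.filter fun e => e.1 = i).card = K)
    (hdegR : ∀ j : R, ((Eproj.filter fun e => e.2 = j).card : ℝ) ≤
      2 * K * ((Fintype.card L : ℝ) / (Fintype.card R : ℝ)))
    (ha : 1 ≤ (Fintype.card L : ℝ) / (Fintype.card R : ℝ)) (hs : 2 < Real.sqrt K)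
    (A : L → Finset Sg) (B : R → Finset Sg) (O : Finset (L × R))
    (hA : ∑ i, (#(A i) : ℝ) < Fintype.card R * Real.sqrt K)
    (hB : ∑ j, (#(B j) : ℝ) < Fintype.card R * Real.sqrt K)
    (hO : (#O : ℝ) < Fintype.card R * Real.sqrt K) :
    (Fintype.card L : ℝ) * K / 6 ≤ #{e ∈ Eproj | e ∉ O ∧
      #(A e.1) ≤ 6 * Real.sqrt K / ((Fintype.card L : ℝ) / Fintype.card R) ∧
      #(B e.2) ≤ 12 * Real.sqrt K} := by
  set m : ℝ := (Fintype.card L : ℝ)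
  set n : ℝ := (Fintype.card R : ℝ)
  set s := Real.sqrt K
  have hmn : n ≤ m := (card_right_pos_and_le ha).2
  have hK : (K : ℝ) = s * s := (Real.mul_self_sqrt (Nat.cast_nonneg K)).symm
  have hO' : (#{e ∈ Eproj | e ∈ O} : ℝ) < m * K / 2 := by
    have : (#{e ∈ Eproj | e ∈ O} : ℝ) ≤ #O := by
      exact_mod_cast card_le_card fun e he => (mem_filter.1 he).2
    have : n * s ≤ m * s := by gcongr
    have : m * s ≤ m * K / 2 := by rw [hK]; nlinarith
    linarith
  have htotal : (#Eproj : ℝ) = m * K := by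
    rw [card_eq_sum_card_fiberwise (f := Prod.fst) (t := univ) fun _ _ => mem_univ _]
    simp [hdeg, m]
  have hsplit := card_le_card_filter_not_add Eproj (· ∈ O)
    (fun e => 6 * s / (m / n) < #(A e.1)) (fun e => 12 * s < #(B e.2))
  simp only [not_lt] at hsplit
  have := (Nat.cast_le (α := ℝ)).2 hsplit
  push_cast at this
  linarith [card_heavy_left_lt hdeg ha (by linarith) A hA,
    card_heavy_right_lt hdegR ha (by linarith) B hB]

variable [DecidableEq Sg] (π : L → R → Sg → Sg)

/-- A uniformly random labelling `α` with `α(c_i) ∈ A i` and `α(x_j) ∈ B j` satisfies each edge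
of `G` with probability at least `1 / (τA τB)`, so some labelling satisfies that fraction of `G`. -/
lemma exists_labelling_satisfying (A : L → Finset Sg) (B : R → Finset Sg)
    (hA : ∀ i, (A i).Nonempty) (hB : ∀ j, (B j).Nonempty) (G : Finset (L × R)) {τA τB : ℝ}
    (hG : ∀ e ∈ G, (∃ σ ∈ A e.1, π e.1 e.2 σ ∈ B e.2) ∧ #(A e.1) ≤ τA ∧ #(B e.2) ≤ τB) :
    ∃ α : L ⊕ R → Sg,
      (#G : ℝ) ≤ τA * τB * #{e ∈ G | π e.1 e.2 (α (Sum.inl e.1)) = α (Sum.inr e.2)} := by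
  set AS := Fintype.piFinset (Sum.elim A B)
  have hAS : AS.Nonempty := Fintype.piFinset_nonempty.2 (by rintro (i | j); exacts [hA i, hB j])
  have hedge : ∀ e ∈ G, (#AS : ℝ) ≤
      τA * τB * #{α ∈ AS | π e.1 e.2 (α (Sum.inl e.1)) = α (Sum.inr e.2)} := by
    intro e he
    obtain ⟨⟨σ, hσ, hπσ⟩, hτA, hτB⟩ := hG e he
    have hcard := card_piFinset_eq_card_filter_mul_mul (Sum.elim A B) Sum.inl_ne_inr
      (i := Sum.inl e.1) (j := Sum.inr e.2) hσ hπσ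
    have hsub : {α ∈ AS | α (Sum.inl e.1) = σ ∧ α (Sum.inr e.2) = π e.1 e.2 σ} ⊆
        {α ∈ AS | π e.1 e.2 (α (Sum.inl e.1)) = α (Sum.inr e.2)} :=
      fun α => by
        simp only [mem_filter]
        rintro ⟨hα, h1, h2⟩
        exact ⟨hα, by rw [h1, h2]⟩
    have hsub' := (Nat.cast_le (α := ℝ)).2 (card_le_card hsub)
    simp only [Sum.elim_inl, Sum.elim_inr] at hcard
    rw [hcard]
    push_cast
    calc _ ≤ (#{α ∈ AS | π e.1 e.2 (α (Sum.inl e.1)) = α (Sum.inr e.2)} : ℝ) * τA * τB := by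
          gcongr
          exact mul_nonneg (Nat.cast_nonneg _) ((Nat.cast_nonneg _).trans hτA)
      _ = _ := by ring
  have hswap : ∑ e ∈ G, (#{α ∈ AS | π e.1 e.2 (α (Sum.inl e.1)) = α (Sum.inr e.2)} : ℝ) =
      ∑ α ∈ AS, (#{e ∈ G | π e.1 e.2 (α (Sum.inl e.1)) = α (Sum.inr e.2)} : ℝ) := by
    simp only [card_filter, Nat.cast_sum]
    exact sum_comm
  have hsum : ∑ _α ∈ AS, (#G : ℝ) ≤
      ∑ α ∈ AS, τA * τB * #{e ∈ G | π e.1 e.2 (α (Sum.inl e.1)) = α (Sum.inr e.2)} := by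
    calc ∑ _α ∈ AS, (#G : ℝ) = ∑ _e ∈ G, (#AS : ℝ) := by simp [mul_comm]
      _ ≤ _ := sum_le_sum hedge
      _ = _ := by rw [← mul_sum, ← mul_sum, hswap]
  obtain ⟨α, -, hα⟩ := exists_le_of_sum_le hAS hsum
  exact ⟨α, hα⟩

theorem card_mul_sqrt_le_of_covers (hdeg : ∀ i : L, (Eproj.filter fun e => e.1 = i).card = K)
    (ha : 1 ≤ (Fintype.card L : ℝ) / (Fintype.card R : ℝ))
    (hdegR : ∀ j : R, ((Eproj.filter fun e => e.2 = j).card : ℝ) ≤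
      2 * K * ((Fintype.card L : ℝ) / (Fintype.card R : ℝ)))
    (hsound : ∀ α : (L ⊕ R) → Sg,
      ((Eproj.filter fun e => π e.1 e.2 (α (Sum.inl e.1)) = α (Sum.inr e.2)).card : ℝ) <
        (Fintype.card L : ℝ) * ((Fintype.card L : ℝ) / (Fintype.card R : ℝ)) / 576)
    (A : L → Finset Sg) (B : R → Finset Sg) (O : Finset (L × R))
    (hA : ∀ i, (A i).Nonempty) (hB : ∀ j, (B j).Nonempty)
    (hcov : ∀ e ∈ Eproj, e ∈ O ∨ ∃ σ ∈ A e.1, π e.1 e.2 σ ∈ B e.2) :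
    (Fintype.card R : ℝ) * Real.sqrt K ≤ ∑ i, (#(A i) : ℝ) + ∑ j, (#(B j) : ℝ) + #O := by
  by_contra! hT
  set m : ℝ := (Fintype.card L : ℝ)
  set n : ℝ := (Fintype.card R : ℝ)
  set a := m / n
  set s := Real.sqrt K
  obtain ⟨hn, hnm⟩ := card_right_pos_and_le ha
  have hsumA : m ≤ ∑ i, (#(A i) : ℝ) := by
    simpa [m] using card_nsmul_le_sum univ (fun i => (#(A i) : ℝ)) 1
      fun i _ => by exact_mod_cast (hA i).card_pos
  have hsumB : n ≤ ∑ j, (#(B j) : ℝ) := by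
    simpa [n] using card_nsmul_le_sum univ (fun j => (#(B j) : ℝ)) 1
      fun j _ => by exact_mod_cast (hB j).card_pos
  have hO : (0 : ℝ) ≤ #O := Nat.cast_nonneg _
  have hs : 2 < s := by nlinarith
  set G := {e ∈ Eproj | e ∉ O ∧ #(A e.1) ≤ 6 * s / a ∧ #(B e.2) ≤ 12 * s}
  have hG : m * K / 6 ≤ #G :=
    card_light_edges_ge hdeg hdegR ha hs A B O (show _ < n * s by linarith)
      (show _ < n * s by linarith) (show _ < n * s by linarith)
  obtain ⟨α, hα⟩ := exists_labelling_satisfying π A B hA hB G (τA := 6 * s / a) (τB := 12 * s)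
    fun e he => by
      obtain ⟨he, heO, hAe, hBe⟩ := mem_filter.1 he
      exact ⟨(hcov e he).resolve_left heO, hAe, hBe⟩
  have hsat : (#{e ∈ G | π e.1 e.2 (α (Sum.inl e.1)) = α (Sum.inr e.2)} : ℝ) < m * a / 576 :=
    lt_of_le_of_lt (by exact_mod_cast card_le_card (filter_subset_filter _ (filter_subset _ _)))
      (hsound α)
  have ha0 : 0 < a := by linarith
  have hτ : 6 * s / a * (12 * s) * (m * a / 576) = m * K / 8 := by
    rw [show (K : ℝ) = s * s from (Real.mul_self_sqrt (Nat.cast_nonneg K)).symm]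
    field_simp
    ring
  have hτ0 : 0 < 6 * s / a * (12 * s) := by positivity
  nlinarith

end ProjectionGame

namespace Spanner

attribute [local simp] SpV.cLab SpV.cDup SpV.xLab SpV.xDup SpV.mid

lemma exists_getElem_of_mem_pathEdges {V : Type*} {vs : List V} {e : V × V}
    (he : e ∈ pathEdges vs) : ∃ n, ∃ h : n + 1 < vs.length, e = (vs[n], vs[n + 1]) := by
  obtain ⟨n, hn, rfl⟩ := List.mem_iff_getElem.1 he
  simp only [pathEdges, List.length_zip, List.length_tail] at hn
  exact ⟨n, by omega, by simp [pathEdges]⟩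

/-- The number of middle-path edges still to be traversed from a vertex to reach a right label. -/
def depth (k : ℕ) {L R Sg : Type} {D T : ℕ} : SpV L R Sg D T → ℕ
  | Sum.inl _ => 2 * k - 3
  | Sum.inr (Sum.inr (Sum.inr (Sum.inr (_, _, _, _, t)))) => 2 * k - 4 - t
  | _ => 0

section MiddlePaths

variable {L R Sg : Type} [Fintype Sg] {k K : ℕ} {i : L} {j : R} {σL σR : Sg}

@[simp] lemma length_midVerts : (midVerts k K i j σL σR).length = 2 * k - 4 + 2 := by
  simp [midVerts]

lemma getElem_midVerts {n : ℕ} (hn : n < (midVerts k K i j σL σR).length) :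
    (n = 0 ∧ (midVerts k K i j σL σR)[n] = SpV.cLab i σL) ∨
    (∃ t : Fin (2 * k - 4), n = t + 1 ∧ (midVerts k K i j σL σR)[n] = SpV.mid i j σL σR t) ∨
    (n = 2 * k - 4 + 1 ∧ (midVerts k K i j σL σR)[n] = SpV.xLab j σR) := by
  simp only [length_midVerts] at hn
  rcases n with _ | n
  · simp [midVerts]
  · rcases Nat.lt_or_ge n (2 * k - 4) with h | h
    · exact Or.inr (Or.inl ⟨⟨n, h⟩, rfl, by simp [midVerts, List.getElem_append_left, h]⟩)
    · exact Or.inr (Or.inr ⟨by omega, by simp [midVerts, List.getElem_append_right, h]⟩)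

lemma mem_EMpath {e : Vt L R Sg k K × Vt L R Sg k K} (he : e ∈ EMpath k K i j σL σR) :
    (e.1 = SpV.cLab i σL ∨ ∃ t, e.1 = SpV.mid i j σL σR t) ∧
    (e.2 = SpV.xLab j σR ∨ ∃ t, e.2 = SpV.mid i j σL σR t) := by
  obtain ⟨n, hn, rfl⟩ := exists_getElem_of_mem_pathEdges he
  have hn' : n + 1 < 2 * k - 4 + 2 := by simpa using hn
  constructor
  · rcases getElem_midVerts (Nat.lt_of_succ_lt hn) with ⟨-, h⟩ | ⟨t, -, h⟩ | ⟨rfl, -⟩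
    exacts [Or.inl h, Or.inr ⟨t, h⟩, by omega]
  · rcases getElem_midVerts hn with ⟨h, -⟩ | ⟨t, -, h⟩ | ⟨-, h⟩
    exacts [by omega, Or.inr ⟨t, h⟩, Or.inl h]

lemma depth_of_mem_EMpath (hk : 2 ≤ k) {e : Vt L R Sg k K × Vt L R Sg k K}
    (he : e ∈ EMpath k K i j σL σR) : depth k e.1 = depth k e.2 + 1 := by
  obtain ⟨n, hn, rfl⟩ := exists_getElem_of_mem_pathEdges he
  rcases getElem_midVerts (Nat.lt_of_succ_lt hn) with ⟨rfl, h1⟩ | ⟨t, rfl, h1⟩ | ⟨rfl, -⟩ <;>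
  rcases getElem_midVerts hn with ⟨h, -⟩ | ⟨t', ht', h2⟩ | ⟨h, h2⟩ <;>
  simp only [length_midVerts] at hn <;>
  first
  | omega
  | simp only [h1, h2, depth, SpV.cLab, SpV.mid, SpV.xLab]; omega

/-- The vertices reachable from `c_{i,σ}` along middle paths. -/
def OnTrack (π : L → R → Sg → Sg) (i : L) (σ : Sg) (v : Vt L R Sg k K) : Prop :=
  v = SpV.cLab i σ ∨ (∃ j t, v = SpV.mid i j σ (π i j σ) t) ∨ ∃ j, v = SpV.xLab j (π i j σ)

end MiddlePaths

section Edges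

variable {L R Sg : Type} [Fintype L] [Fintype R] [Fintype Sg]
    [DecidableEq L] [DecidableEq R] [DecidableEq Sg]
    {Eproj : Finset (L × R)} {π : L → R → Sg → Sg} {σ0 : Sg} {k K : ℕ}
    {e : Vt L R Sg k K × Vt L R Sg k K}

lemma mem_Edges (he : e ∈ Edges Eproj π σ0 k K) :
    (∃ i l σ, e = (SpV.cDup i l, SpV.cLab i σ)) ∨
    (∃ i σ σ', e = (SpV.cLab i σ, SpV.cLab i σ')) ∨
    e ∈ EMedges Eproj π k K ∨
    (∃ j σ σ', e = (SpV.xLab j σ, SpV.xLab j σ')) ∨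
    (∃ j l σ, e = (SpV.xLab j σ, SpV.xDup j l)) ∨
    (∃ i j l, e = (SpV.cDup i l, SpV.xDup j l)) := by
  simp only [Edges, ELedges, ELStars, ERStars, ERedges, EOuter, mem_union, mem_image,
    mem_filter, mem_univ, true_and, mem_product, and_true, Prod.exists] at he
  rcases he with ((((⟨i, l, σ, rfl⟩ | ⟨i, σ, -, rfl⟩ | ⟨i, σ, -, rfl⟩) | h) |
    ⟨j, σ, -, rfl⟩ | ⟨j, σ, -, rfl⟩) | ⟨j, l, σ, rfl⟩) | ⟨i, j, l, -, rfl⟩ <;> simp [*]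

lemma mem_EMedges (he : e ∈ EMedges Eproj π k K) : ∃ i j σ, e ∈ EMpath k K i j σ (π i j σ) := by
  simp only [EMedges, mem_biUnion, mem_univ, true_and, List.mem_toFinset] at he
  obtain ⟨⟨i, j⟩, -, σ, he⟩ := he
  exact ⟨i, j, σ, he⟩

lemma fst_snd_of_mem_EMedges (he : e ∈ EMedges Eproj π k K) :
    ((∃ i σ, e.1 = SpV.cLab i σ) ∨ ∃ i j σL σR t, e.1 = SpV.mid i j σL σR t) ∧
    ((∃ j σ, e.2 = SpV.xLab j σ) ∨ ∃ i j σL σR t, e.2 = SpV.mid i j σL σR t) := by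
  obtain ⟨i, j, σ, hp⟩ := mem_EMedges he
  obtain ⟨h1 | ⟨t, h1⟩, h2 | ⟨t', h2⟩⟩ := mem_EMpath hp
  all_goals refine ⟨?_, ?_⟩
  all_goals first
    | exact Or.inl ⟨_, _, ‹_›⟩
    | exact Or.inr ⟨_, _, _, _, _, ‹_›⟩

lemma fst_ne_xDup (he : e ∈ Edges Eproj π σ0 k K) (j : R) (l : Fin (numDup Sg k K)) :
    e.1 ≠ SpV.xDup j l := by
  rcases mem_Edges he with ⟨_, _, _, rfl⟩ | ⟨_, _, _, rfl⟩ | h | ⟨_, _, _, rfl⟩ | ⟨_, _, _, rfl⟩ |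
    ⟨_, _, _, rfl⟩
  all_goals try simp
  rcases (fst_snd_of_mem_EMedges h).1 with ⟨_, _, h1⟩ | ⟨_, _, _, _, _, h1⟩ <;> simp [h1]

lemma snd_ne_cDup (he : e ∈ Edges Eproj π σ0 k K) (i : L) (l : Fin (numDup Sg k K)) :
    e.2 ≠ SpV.cDup i l := by
  rcases mem_Edges he with ⟨_, _, _, rfl⟩ | ⟨_, _, _, rfl⟩ | h | ⟨_, _, _, rfl⟩ | ⟨_, _, _, rfl⟩ |
    ⟨_, _, _, rfl⟩
  all_goals try simp
  rcases (fst_snd_of_mem_EMedges h).2 with ⟨_, _, h2⟩ | ⟨_, _, _, _, _, h2⟩ <;> simp [h2]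

lemma eq_of_fst_eq_cDup (he : e ∈ Edges Eproj π σ0 k K) {i : L} {l : Fin (numDup Sg k K)}
    (h : e.1 = SpV.cDup i l) :
    (∃ σ, e = (SpV.cDup i l, SpV.cLab i σ)) ∨ ∃ j, e = (SpV.cDup i l, SpV.xDup j l) := by
  rcases mem_Edges he with ⟨_, _, σ, rfl⟩ | ⟨_, _, _, rfl⟩ | hM | ⟨_, _, _, rfl⟩ | ⟨_, _, _, rfl⟩ |
    ⟨_, j, _, rfl⟩
  all_goals simp at h
  · obtain ⟨rfl, rfl⟩ := h; exact Or.inl ⟨σ, rfl⟩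
  · rcases (fst_snd_of_mem_EMedges hM).1 with ⟨_, _, h1⟩ | ⟨_, _, _, _, _, h1⟩ <;> simp [h1] at h
  · obtain ⟨rfl, rfl⟩ := h; exact Or.inr ⟨j, rfl⟩

lemma eq_of_snd_eq_xDup (he : e ∈ Edges Eproj π σ0 k K) {j : R} {l : Fin (numDup Sg k K)}
    (h : e.2 = SpV.xDup j l) :
    (∃ σ, e = (SpV.xLab j σ, SpV.xDup j l)) ∨ ∃ i, e = (SpV.cDup i l, SpV.xDup j l) := by
  rcases mem_Edges he with ⟨_, _, _, rfl⟩ | ⟨_, _, _, rfl⟩ | hM | ⟨_, _, _, rfl⟩ | ⟨_, _, σ, rfl⟩ |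
    ⟨i, _, _, rfl⟩
  all_goals simp at h
  · rcases (fst_snd_of_mem_EMedges hM).2 with ⟨_, _, h2⟩ | ⟨_, _, _, _, _, h2⟩ <;> simp [h2] at h
  · obtain ⟨rfl, rfl⟩ := h; exact Or.inl ⟨σ, rfl⟩
  · obtain ⟨rfl, rfl⟩ := h; exact Or.inr ⟨i, rfl⟩

lemma depth_fst_le (hk : 2 ≤ k) (he : e ∈ Edges Eproj π σ0 k K) :
    depth k e.1 ≤ depth k e.2 + if e ∈ EMedges Eproj π k K then 1 else 0 := by
  rcases mem_Edges he with ⟨_, _, _, rfl⟩ | ⟨_, _, _, rfl⟩ | hM | ⟨_, _, _, rfl⟩ | ⟨_, _, _, rfl⟩ |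
    ⟨_, _, _, rfl⟩
  · simp [depth]
  · simp [depth]
  · obtain ⟨i, j, σ, hp⟩ := mem_EMedges hM
    rw [if_pos hM, depth_of_mem_EMpath hk hp]
  all_goals simp [depth]

lemma OnTrack.snd (he : e ∈ EMedges Eproj π k K) {i : L} {σ : Sg} (h : OnTrack π i σ e.1) :
    OnTrack π i σ e.2 := by
  obtain ⟨i', j', σ', hp⟩ := mem_EMedges he
  obtain ⟨h1 | ⟨t, h1⟩, h2 | ⟨t', h2⟩⟩ := mem_EMpath hp
  all_goals rcases h with h | ⟨j, t'', h⟩ | ⟨j, h⟩ <;> rw [h1] at h <;> simp at h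
  all_goals first | obtain ⟨rfl, rfl⟩ := h | obtain ⟨rfl, -, rfl, -⟩ := h
  all_goals simp [OnTrack, h2]

end Edges

section Paths

variable {L R Sg : Type} [Fintype L] [Fintype R] [Fintype Sg]
    [DecidableEq L] [DecidableEq R] [DecidableEq Sg]
    {Eproj : Finset (L × R)} {π : L → R → Sg → Sg} {σ0 : Sg} {k K : ℕ}
    {S : Finset (Vt L R Sg k K × Vt L R Sg k K)} {p : List (Vt L R Sg k K × Vt L R Sg k K)}

/-- Such a walk must lose depth at every step, so it runs along the middle path of `(i, σ)`. -/
lemma eq_proj_of_isWalk (hk : 2 ≤ k) {i : L} {σ : Sg} {j : R} {τ : Sg}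
    (hp : IsWalk (Edges Eproj π σ0 k K) (SpV.cLab i σ) (SpV.xLab j τ) p)
    (hlen : p.length ≤ 2 * k - 3) : τ = π i j σ := by
  have hmid : ∀ e ∈ p, e ∈ EMedges Eproj π k K :=
    hp.forall_mem_of_le (fun e he => depth_fst_le hk he) (by simp [depth]; omega)
  have htrack : OnTrack π i σ (SpV.xLab j τ : Vt L R Sg k K) :=
    hp.invariant (fun e he h => h.snd (hmid e he)) (Or.inl rfl)
  rcases htrack with h | ⟨_, _, h⟩ | ⟨_, h⟩ <;> simp at h
  obtain ⟨rfl, rfl⟩ := h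
  rfl

lemma isWalk_from_cDup (hS : S ⊆ Edges Eproj π σ0 k K) {i : L} {l : Fin (numDup Sg k K)}
    {v : Vt L R Sg k K} (hp : IsWalk S (SpV.cDup i l) v p) (hne : p ≠ []) :
    (∃ σ q, p = (SpV.cDup i l, SpV.cLab i σ) :: q ∧ IsWalk S (SpV.cLab i σ) v q) ∨
    ∃ j, p = [(SpV.cDup i l, SpV.xDup j l)] ∧ v = SpV.xDup j l := by
  obtain ⟨e, q, rfl⟩ := List.exists_cons_of_ne_nil hne
  obtain ⟨h1, he, hq⟩ := hp
  rcases eq_of_fst_eq_cDup (hS he) h1 with ⟨σ, rfl⟩ | ⟨j, rfl⟩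
  · exact Or.inl ⟨σ, q, rfl, hq⟩
  · obtain ⟨rfl, rfl⟩ := hq.eq_nil_of_forall_fst_ne (fun f hf => fst_ne_xDup (hS hf) j l)
    exact Or.inr ⟨j, rfl, rfl⟩

lemma isWalk_to_xDup (hS : S ⊆ Edges Eproj π σ0 k K) {j : R} {l : Fin (numDup Sg k K)}
    {u : Vt L R Sg k K} (hp : IsWalk S u (SpV.xDup j l) p) (hne : p ≠ []) :
    (∃ σ q, p = q ++ [(SpV.xLab j σ, SpV.xDup j l)] ∧ IsWalk S u (SpV.xLab j σ) q) ∨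
    ∃ i, p = [(SpV.cDup i l, SpV.xDup j l)] ∧ u = SpV.cDup i l := by
  obtain ⟨q, g, rfl⟩ : ∃ q g, p = q ++ [g] := ⟨_, _, (List.dropLast_append_getLast hne).symm⟩
  obtain ⟨hq, hg, h2⟩ := isWalk_concat.1 hp
  rcases eq_of_snd_eq_xDup (hS hg) h2 with ⟨σ, rfl⟩ | ⟨i, rfl⟩
  · exact Or.inl ⟨σ, q, rfl, hq⟩
  · obtain ⟨rfl, rfl⟩ := hq.eq_nil_of_forall_snd_ne (fun f hf => snd_ne_cDup (hS hf) i l)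
    exact Or.inr ⟨i, rfl, rfl⟩

end Paths

section Layers

variable {L R Sg : Type} [DecidableEq L] [DecidableEq R] [DecidableEq Sg] {D T : ℕ}
    (S : Finset (SpV L R Sg D T × SpV L R Sg D T)) (l : Fin D)

def leftLabels [Fintype Sg] (i : L) : Finset Sg := {σ | (SpV.cDup i l, SpV.cLab i σ) ∈ S}

def rightLabels [Fintype Sg] (j : R) : Finset Sg := {σ | (SpV.xLab j σ, SpV.xDup j l) ∈ S}

def outerPairs [Fintype L] [Fintype R] : Finset (L × R) :=
  {e | (SpV.cDup e.1 l, SpV.xDup e.2 l) ∈ S}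

variable {S l}

@[simp] lemma mem_leftLabels [Fintype Sg] {i : L} {σ : Sg} :
    σ ∈ leftLabels S l i ↔ (SpV.cDup i l, SpV.cLab i σ) ∈ S := by
  simp only [leftLabels, mem_filter_univ]

@[simp] lemma mem_rightLabels [Fintype Sg] {j : R} {σ : Sg} :
    σ ∈ rightLabels S l j ↔ (SpV.xLab j σ, SpV.xDup j l) ∈ S := by
  simp only [rightLabels, mem_filter_univ]

@[simp] lemma mem_outerPairs [Fintype L] [Fintype R] {e : L × R} :
    e ∈ outerPairs S l ↔ (SpV.cDup e.1 l, SpV.xDup e.2 l) ∈ S := by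
  simp only [outerPairs, mem_filter_univ]

variable (S l)

def layerEdge : (L × Sg) ⊕ (R × Sg) ⊕ (L × R) → SpV L R Sg D T × SpV L R Sg D T
  | .inl (i, σ) => (SpV.cDup i l, SpV.cLab i σ)
  | .inr (.inl (j, σ)) => (SpV.xLab j σ, SpV.xDup j l)
  | .inr (.inr (i, j)) => (SpV.cDup i l, SpV.xDup j l)

omit [DecidableEq L] [DecidableEq R] [DecidableEq Sg] in
lemma layerEdge_injective :
    Function.Injective fun x : Fin D × ((L × Sg) ⊕ (R × Sg) ⊕ (L × R)) =>
      (layerEdge x.1 x.2 : SpV L R Sg D T × SpV L R Sg D T) := by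
  rintro ⟨l, (⟨i, σ⟩ | ⟨j, σ⟩ | ⟨i, j⟩)⟩ ⟨l', (⟨i', σ'⟩ | ⟨j', σ'⟩ | ⟨i', j'⟩)⟩ h <;>
    simp_all [layerEdge]

lemma card_filter_layerEdge_mem [Fintype L] [Fintype R] [Fintype Sg] :
    #{x | layerEdge l x ∈ S} =
      ∑ i, #(leftLabels S l i) + ∑ j, #(rightLabels S l j) + #(outerPairs S l) := by
  rw [card_filter, Fintype.sum_sum_type, Fintype.sum_sum_type]
  simp only [card_filter, Fintype.sum_prod_type, layerEdge, leftLabels, rightLabels, outerPairs,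
    add_assoc]
  rfl

lemma sum_card_layers_le [Fintype L] [Fintype R] [Fintype Sg] :
    ∑ l, (∑ i, #(leftLabels S l i) + ∑ j, #(rightLabels S l j) + #(outerPairs S l)) ≤ #S := by
  simp_rw [← card_filter_layerEdge_mem]
  calc ∑ l, #{x | layerEdge l x ∈ S}
      = #{x : Fin D × ((L × Sg) ⊕ (R × Sg) ⊕ (L × R)) | layerEdge x.1 x.2 ∈ S} := by
        simp only [card_filter, Fintype.sum_prod_type]
    _ ≤ #S := card_le_card_of_injOn _ (fun x hx => (mem_filter.1 hx).2)
        layerEdge_injective.injOn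

end Layers

section Cover

variable {L R Sg : Type} [Fintype L] [Fintype R] [Fintype Sg]
    [DecidableEq L] [DecidableEq R] [DecidableEq Sg]
    {Eproj : Finset (L × R)} {π : L → R → Sg → Sg} {σ0 : Sg} {k K t : ℕ}
    {S : Finset (Vt L R Sg k K × Vt L R Sg k K)}

lemma leftLabels_nonempty (hS : IsSpanner (Edges Eproj π σ0 k K) S t) (l : Fin (numDup Sg k K))
    (i : L) : (leftLabels S l i).Nonempty := by
  have he : (SpV.cDup i l, SpV.cLab i σ0) ∈ Edges Eproj π σ0 k K := by
    simp [Edges, ELedges]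
  obtain ⟨p, hp, -⟩ := hS.2 _ he
  have hw := IsDirPath.isWalk hp
  rcases isWalk_from_cDup hS.1 hw hp.1 with ⟨σ, q, rfl, -⟩ | ⟨j, -, h⟩
  · exact ⟨σ, mem_leftLabels.2 hw.2.1⟩
  · simp at h

lemma rightLabels_nonempty (hS : IsSpanner (Edges Eproj π σ0 k K) S t) (l : Fin (numDup Sg k K))
    (j : R) : (rightLabels S l j).Nonempty := by
  have he : (SpV.xLab j σ0, SpV.xDup j l) ∈ Edges Eproj π σ0 k K := by
    simp [Edges, ERedges]
  obtain ⟨p, hp, -⟩ := hS.2 _ he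
  have hw := IsDirPath.isWalk hp
  rcases isWalk_to_xDup hS.1 hw hp.1 with ⟨σ, q, rfl, -⟩ | ⟨i, -, h⟩
  · exact ⟨σ, mem_rightLabels.2 (isWalk_concat.1 hw).2.1⟩
  · simp at h

lemma covers_of_isSpanner (hk : 2 ≤ k) (hS : IsSpanner (Edges Eproj π σ0 k K) S (2 * k - 1))
    (l : Fin (numDup Sg k K)) {e : L × R} (he : e ∈ Eproj) :
    e ∈ outerPairs S l ∨ ∃ σ ∈ leftLabels S l e.1, π e.1 e.2 σ ∈ rightLabels S l e.2 := by
  have he' : (SpV.cDup e.1 l, SpV.xDup e.2 l) ∈ Edges Eproj π σ0 k K := by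
    simp only [Edges, EOuter, mem_union, mem_image, mem_product, mem_univ, and_true]
    exact Or.inr ⟨(e, l), he, rfl⟩
  obtain ⟨p, hp, hlen⟩ := hS.2 _ he'
  have hw := IsDirPath.isWalk hp
  rcases isWalk_from_cDup hS.1 hw hp.1 with ⟨σ, q, rfl, hq⟩ | ⟨j, rfl, h⟩
  · right
    rcases isWalk_to_xDup hS.1 hq (hq.ne_nil (by simp)) with ⟨τ, q', rfl, hq'⟩ | ⟨i, -, h⟩
    · have hτ := eq_proj_of_isWalk hk (hq'.mono hS.1) (by simp at hlen; omega)
      refine ⟨σ, mem_leftLabels.2 hw.2.1, ?_⟩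
      rw [← hτ]
      exact mem_rightLabels.2 (isWalk_concat.1 hq).2.1
    · simp at h
  · left
    simp only [SpV.xDup, Sum.inr.injEq, Sum.inl.injEq, Prod.mk.injEq, and_true] at h
    subst h
    exact mem_outerPairs.2 hw.2.1

end Cover

end Spanner

theorem directed_spanner_integral_lower_bound_general
    {L R Sg : Type} [Fintype L] [Fintype R] [Fintype Sg]
    [DecidableEq L] [DecidableEq R] [DecidableEq Sg]
    (Eproj : Finset (L × R)) (π : L → R → Sg → Sg) (σ0 : Sg) (k K : ℕ)
    (hk : 2 ≤ k)
    (hdeg : ∀ i : L, (Eproj.filter fun e => e.1 = i).card = K)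
    (ha : 1 ≤ (Fintype.card L : ℝ) / (Fintype.card R : ℝ))
    (hdegR : ∀ j : R, ((Eproj.filter fun e => e.2 = j).card : ℝ) ≤
      2 * K * ((Fintype.card L : ℝ) / (Fintype.card R : ℝ)))
    (hsound : ∀ α : (L ⊕ R) → Sg,
      ((Eproj.filter fun e => π e.1 e.2 (α (Sum.inl e.1)) = α (Sum.inr e.2)).card : ℝ) <
        (Fintype.card L : ℝ) * ((Fintype.card L : ℝ) / (Fintype.card R : ℝ)) / 576) :
    ∀ S : Finset (Spanner.Vt L R Sg k K × Spanner.Vt L R Sg k K),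
      IsSpanner (Spanner.Edges Eproj π σ0 k K) S (2 * k - 1) →
      (Fintype.card R : ℝ) * k * K * Real.sqrt K * Fintype.card Sg ≤ (S.card : ℝ) := by
  open Spanner in
  intro S hS
  have hlayer : ∀ l, (Fintype.card R : ℝ) * Real.sqrt K ≤
      ∑ i, (#(leftLabels S l i) : ℝ) + ∑ j, (#(rightLabels S l j) : ℝ) + #(outerPairs S l) :=
    fun l => ProjectionGame.card_mul_sqrt_le_of_covers π hdeg ha hdegR hsound _ _ _
      (leftLabels_nonempty hS l) (rightLabels_nonempty hS l)
      fun e he => covers_of_isSpanner hk hS l he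
  calc (Fintype.card R : ℝ) * k * K * Real.sqrt K * Fintype.card Sg
      = ∑ _l : Fin (numDup Sg k K), (Fintype.card R : ℝ) * Real.sqrt K := by
        simp only [sum_const, card_univ, Fintype.card_fin, numDup, nsmul_eq_mul]
        push_cast
        ring
    _ ≤ _ := sum_le_sum fun l _ => hlayer l
    _ ≤ #S := by exact_mod_cast sum_card_layers_le S

/-- Lemma `directSound`.  Let `G = (V,E)` be the directed spanner instance
built (with parameters `k ≥ 2`, `K ≥ 1`) from a projection games instance in which every left
vertex has degree exactly `K`, and assume that `a := m/n ≥ 1`, every right vertex has degree at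
most `2·K·a`, `a ≤ 12·√K`, and every labelling satisfies fewer than `m·a/576` edges of
`E_Proj`.  Then every `(2k−1)`-spanner of `G` has at least `n·k·K^{3/2}·|Σ|` edges. -/
theorem directed_spanner_integral_lower_bound
    {L R Sg : Type} [Fintype L] [Fintype R] [Fintype Sg]
    [DecidableEq L] [DecidableEq R] [DecidableEq Sg]
    (Eproj : Finset (L × R)) (π : L → R → Sg → Sg) (σ0 : Sg) (k K : ℕ)
    (hk : 2 ≤ k) (hK : 1 ≤ K)
    (hdeg : ∀ i : L, (Eproj.filter fun e => e.1 = i).card = K)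
    (ha : 1 ≤ (Fintype.card L : ℝ) / (Fintype.card R : ℝ))
    (hdegR : ∀ j : R, ((Eproj.filter fun e => e.2 = j).card : ℝ) ≤
      2 * K * ((Fintype.card L : ℝ) / (Fintype.card R : ℝ)))
    (ha2 : (Fintype.card L : ℝ) / (Fintype.card R : ℝ) ≤ 12 * Real.sqrt K)
    (hsound : ∀ α : (L ⊕ R) → Sg,
      ((Eproj.filter fun e => π e.1 e.2 (α (Sum.inl e.1)) = α (Sum.inr e.2)).card : ℝ) <
        (Fintype.card L : ℝ) * ((Fintype.card L : ℝ) / (Fintype.card R : ℝ)) / 576) :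
    ∀ S : Finset (Spanner.Vt L R Sg k K × Spanner.Vt L R Sg k K),
      IsSpanner (Spanner.Edges Eproj π σ0 k K) S (2 * k - 1) →
      (Fintype.card R : ℝ) * k * K * Real.sqrt K * Fintype.card Sg ≤ (S.card : ℝ) :=
  directed_spanner_integral_lower_bound_general Eproj π σ0 k K hk hdeg ha hdegR hsound
end
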